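/- arXiv:1803.03358 — 7 statements merged into one kernel-verified Lean document; each statement's English description precedes it below -/
import Mathlib

section
/- Let (G, k) be a yes-instance of the diamond-free editing problem and let (E+, E−) be a solution of (G, k). If uv is an edge of G and there exist k+1 pairwise adjacent vertices in N(u) ∩ N(v), then uv ∉ E−. -/
variable {V : Type*}

/-- An induced diamond on vertices `u v x y`: all five edges present except `xy`;
`uv` is the cross edge and `xy` the missing edge. -/
def IsDiamond (G : SimpleGraph V) (u v x y : V) : Prop :=
  u ≠ v ∧ u ≠ x ∧ u ≠ y ∧ v ≠ x ∧ v ≠ y ∧ x ≠ y ∧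
  G.Adj u v ∧ G.Adj u x ∧ G.Adj u y ∧ G.Adj v x ∧ G.Adj v y ∧ ¬ G.Adj x y

def DiamondFree (G : SimpleGraph V) : Prop :=
  ∀ u v x y : V, ¬ IsDiamond G u v x y

/-- The graph `G △ E±` obtained from `G` by adding the edges of `Ep` and
deleting the edges of `Em`. -/
def EditedGraph (G : SimpleGraph V) (Ep Em : Finset (Sym2 V)) : SimpleGraph V :=
  SimpleGraph.fromEdgeSet ((G.edgeSet ∪ ↑Ep) \ ↑Em)

/-- `(Ep, Em)` is a solution of the instance `(G, k)` of diamond-free editing: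
`Ep` is a set of non-edges of `G`, `Em` a set of edges of `G`,
`|Ep| + |Em| ≤ k`, and the edited graph is diamond-free. -/
def IsSolution (G : SimpleGraph V) (k : ℕ) (Ep Em : Finset (Sym2 V)) : Prop :=
  (∀ e ∈ Ep, e ∉ G.edgeSet ∧ ¬ e.IsDiag) ∧
  (∀ e ∈ Em, e ∈ G.edgeSet) ∧
  Ep.card + Em.card ≤ k ∧
  DiamondFree (EditedGraph G Ep Em)

def YesInstance (G : SimpleGraph V) (k : ℕ) : Prop :=
  ∃ Ep Em : Finset (Sym2 V), IsSolution G k Ep Em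

/-- A minimum solution: a solution such that no valid edit set of strictly
smaller total size makes the graph diamond-free. -/
def IsMinSolution (G : SimpleGraph V) (k : ℕ) (Ep Em : Finset (Sym2 V)) : Prop :=
  IsSolution G k Ep Em ∧
  ∀ Ep' Em' : Finset (Sym2 V),
    (∀ e ∈ Ep', e ∉ G.edgeSet ∧ ¬ e.IsDiag) →
    (∀ e ∈ Em', e ∈ G.edgeSet) →
    DiamondFree (EditedGraph G Ep' Em') →
    Ep.card + Em.card ≤ Ep'.card + Em'.card

/-- There are `2k+2` distinct vertices `x 0, y 0, …, x k, y k` in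
`N(u) ∩ N(v)` with each `x i y i` an edge of `G`. -/
def EdgePairedWitness (G : SimpleGraph V) (k : ℕ) (u v : V) : Prop :=
  ∃ x y : Fin (k + 1) → V,
    Function.Injective (Sum.elim x y) ∧
    (∀ i, G.Adj u (x i) ∧ G.Adj v (x i) ∧ G.Adj u (y i) ∧ G.Adj v (y i)) ∧
    (∀ i, G.Adj (x i) (y i))

/-- There are `2k+2` distinct vertices `x 0, y 0, …, x k, y k` in
`N(u) ∩ N(v)` with each `x i y i` a non-edge of `G`. -/
def NonEdgePairedWitness (G : SimpleGraph V) (k : ℕ) (u v : V) : Prop :=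
  ∃ x y : Fin (k + 1) → V,
    Function.Injective (Sum.elim x y) ∧
    (∀ i, G.Adj u (x i) ∧ G.Adj v (x i) ∧ G.Adj u (y i) ∧ G.Adj v (y i)) ∧
    (∀ i, ¬ G.Adj (x i) (y i))

/-- The instance `(G, k)` is reduced: neither sunflower rule applies. -/
def Reduced (G : SimpleGraph V) (k : ℕ) : Prop :=
  (∀ u v : V, u ≠ v → ¬ G.Adj u v → ¬ EdgePairedWitness G k u v) ∧
  (∀ u v : V, G.Adj u v → ¬ NonEdgePairedWitness G k u v)

/-- `K` is a maximal clique of `G`. -/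
def IsMaxClique (G : SimpleGraph V) (K : Finset V) : Prop :=
  G.IsClique (↑K : Set V) ∧
  ∀ K' : Finset V, G.IsClique (↑K' : Set V) → K ⊆ K' → K = K'

/-- `K` is a type-I maximal clique: it shares at least two vertices with some
other maximal clique. -/
def TypeI [DecidableEq V] (G : SimpleGraph V) (K : Finset V) : Prop :=
  IsMaxClique G K ∧
  ∃ K' : Finset V, IsMaxClique G K' ∧ K' ≠ K ∧ 2 ≤ (K ∩ K').card

/-- `K` is a type-II maximal clique: it shares at most one vertex with every
other maximal clique. -/
def TypeII [DecidableEq V] (G : SimpleGraph V) (K : Finset V) : Prop :=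
  IsMaxClique G K ∧
  ∀ K' : Finset V, IsMaxClique G K' → K' ≠ K → (K ∩ K').card ≤ 1

/-- A small (fewer than `3k+2` vertices) type-I maximal clique. -/
def SmallTypeI [DecidableEq V] (G : SimpleGraph V) (k : ℕ) (K : Finset V) : Prop :=
  TypeI G K ∧ K.card < 3 * k + 2

/-- `S(G)`: the union of all small type-I maximal cliques of `G`. -/
def SG [DecidableEq V] (G : SimpleGraph V) (k : ℕ) : Set V :=
  {v | ∃ K : Finset V, SmallTypeI G k K ∧ v ∈ K}

/-- A vulnerable vertex: it is in a small type-I maximal clique, or in a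
type-II maximal clique intersecting a small type-I maximal clique. -/
def Vulnerable [DecidableEq V] (G : SimpleGraph V) (k : ℕ) (v : V) : Prop :=
  (∃ K : Finset V, SmallTypeI G k K ∧ v ∈ K) ∨
  (∃ K1 K2 : Finset V, SmallTypeI G k K1 ∧ TypeII G K2 ∧
    (K1 ∩ K2).Nonempty ∧ v ∈ K2)

/-- if `uv` is an edge of `G` and there are `k+1` pairwise adjacent
vertices in `N(u) ∩ N(v)`, then `uv ∉ E−` for any solution `(Ep, Em)`. -/
theorem stmt0 [Fintype V] [DecidableEq V] (G : SimpleGraph V) (k : ℕ)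
    (hyes : YesInstance G k) (Ep Em : Finset (Sym2 V)) (hsol : IsSolution G k Ep Em)
    (u v : V) (huv : G.Adj u v)
    (T : Finset V) (hTcard : T.card = k + 1)
    (hTsub : (↑T : Set V) ⊆ G.neighborSet u ∩ G.neighborSet v)
    (hTclique : G.IsClique (↑T : Set V)) :
    s(u, v) ∉ Em := by
  intro hmem
  obtain ⟨hEp, hEm, hcard, hdf⟩ := hsol
  -- facts about T
  have hTuv : ∀ w ∈ T, G.Adj u w ∧ G.Adj v w := by
    intro w hw
    have := hTsub (by exact_mod_cast hw)
    exact ⟨this.1, this.2⟩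
  have huT : u ∉ T := fun h => (hTuv u h).1.ne rfl
  have hvT : v ∉ T := fun h => (hTuv v h).2.ne rfl
  have notT : ∀ a : V, (a = u ∨ a = v) → ∀ b ∈ T, a ≠ b := by
    rintro a (rfl | rfl) b hb rfl
    exacts [huT hb, hvT hb]
  -- the set of edits other than s(u,v)
  set B : Finset (Sym2 V) := (Ep ∪ Em).erase s(u, v) with hBdef
  have hdisj : Disjoint Ep Em := by
    rw [Finset.disjoint_left]
    intro e he he'
    exact (hEp e he).1 (hEm e he')
  have hBcard : B.card + 1 ≤ k := by
    have h1 : (Ep ∪ Em).card = Ep.card + Em.card := Finset.card_union_of_disjoint hdisj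
    have h2 : s(u, v) ∈ Ep ∪ Em := Finset.mem_union_right _ hmem
    have h3 : B.card + 1 = (Ep ∪ Em).card := Finset.card_erase_add_one h2
    omega
  have hmemB : ∀ e ∈ Em, e ≠ s(u, v) → e ∈ B :=
    fun e he hne => Finset.mem_erase.mpr ⟨hne, Finset.mem_union_right _ he⟩
  -- spoiled vertices
  set S : Finset V := T.filter (fun w => s(u, w) ∈ B ∨ s(v, w) ∈ B) with hSdef
  set U : Finset V := T \ S with hUdef
  have hSsubT : S ⊆ T := Finset.filter_subset _ _
  have hScard : U.card + S.card = k + 1 := by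
    have h1 : U.card = T.card - S.card := Finset.card_sdiff_of_subset hSsubT
    have h2 : S.card ≤ T.card := Finset.card_le_card hSsubT
    omega
  -- the map sending a spoiled vertex to an edit touching it
  set f : V → Sym2 V := fun w => if s(u, w) ∈ B then s(u, w) else s(v, w) with hfdef
  have hf : ∀ w : V, ∃ a, (a = u ∨ a = v) ∧ f w = s(a, w) := by
    intro w
    by_cases h : s(u, w) ∈ B
    · exact ⟨u, Or.inl rfl, if_pos h⟩
    · exact ⟨v, Or.inr rfl, if_neg h⟩
  have hfB : ∀ w ∈ S, f w ∈ B := by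
    intro w hw
    rw [hSdef, Finset.mem_filter] at hw
    rcases hw.2 with h | h
    · rw [hfdef]; simpa [h] using h
    · rw [hfdef]
      by_cases h' : s(u, w) ∈ B <;> simp [h', h]
  have hinj_uv : ∀ w ∈ T, ∀ w' ∈ T, f w = f w' → w = w' := by
    intro w hw w' hw' heq
    obtain ⟨a, ha, hfa⟩ := hf w
    obtain ⟨a', ha', hfa'⟩ := hf w'
    rw [hfa, hfa', Sym2.eq_iff] at heq
    rcases heq with ⟨h1, h2⟩ | ⟨h1, h2⟩
    · exact h2
    · exact absurd h1 (notT a ha w' hw')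
  have hSinj : S.card ≤ B.card := by
    apply Finset.card_le_card_of_injOn f hfB
    intro w hw w' hw' heq
    exact hinj_uv w (hSsubT hw) w' (hSsubT hw') heq
  have hUne : U.Nonempty := by
    rcases Finset.eq_empty_or_nonempty U with h | h
    · rw [h, Finset.card_empty] at hScard
      omega
    · exact h
  obtain ⟨w0, hw0U⟩ := hUne
  have hw0T : w0 ∈ T := (Finset.mem_sdiff.mp hw0U).1
  have hw0S : w0 ∉ S := (Finset.mem_sdiff.mp hw0U).2
  -- find an unspoiled partner w1
  have hkey : ∃ w1 ∈ U, w1 ≠ w0 ∧ s(w0, w1) ∉ B := by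
    by_contra hcon
    push_neg at hcon
    set g : V → Sym2 V := fun w => if w ∈ S then f w else s(w0, w) with hgdef
    have hcount : (T.erase w0).card ≤ B.card := by
      apply Finset.card_le_card_of_injOn g
      · intro w hw
        have hwT : w ∈ T := Finset.mem_of_mem_erase hw
        have hwne : w ≠ w0 := Finset.ne_of_mem_erase hw
        by_cases hwS : w ∈ S
        · rw [hgdef]; simp only [hwS, if_true]
          exact hfB w hwS
        · rw [hgdef]; simp only [hwS, if_false]
          exact hcon w (Finset.mem_sdiff.mpr ⟨hwT, hwS⟩) hwne
      · intro w hw w' hw' heq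
        have hwT : w ∈ T := Finset.mem_of_mem_erase (by exact_mod_cast hw)
        have hw'T : w' ∈ T := Finset.mem_of_mem_erase (by exact_mod_cast hw')
        have hwne : w ≠ w0 := Finset.ne_of_mem_erase (by exact_mod_cast hw)
        have hw'ne : w' ≠ w0 := Finset.ne_of_mem_erase (by exact_mod_cast hw')
        rw [hgdef] at heq
        simp only at heq
        by_cases hwS : w ∈ S <;> by_cases hw'S : w' ∈ S
        · rw [if_pos hwS, if_pos hw'S] at heq
          exact hinj_uv w hwT w' hw'T heq
        · rw [if_pos hwS, if_neg hw'S] at heq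
          obtain ⟨a, ha, hfa⟩ := hf w
          rw [hfa, Sym2.eq_iff] at heq
          rcases heq with ⟨h1, h2⟩ | ⟨h1, h2⟩
          · exact absurd h1 (notT a ha w0 hw0T)
          · exact absurd h1 (notT a ha w' hw'T)
        · rw [if_neg hwS, if_pos hw'S] at heq
          obtain ⟨a, ha, hfa⟩ := hf w'
          rw [hfa, Sym2.eq_iff] at heq
          rcases heq with ⟨h1, h2⟩ | ⟨h1, h2⟩
          · exact absurd h1.symm (notT a ha w0 hw0T)
          · exact absurd h2.symm (notT a ha w hwT)
        · rw [if_neg hwS, if_neg hw'S, Sym2.eq_iff] at heq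
          rcases heq with ⟨h1, h2⟩ | ⟨h1, h2⟩
          · exact h2
          · exact absurd h2 hwne
    rw [Finset.card_erase_of_mem hw0T, hTcard] at hcount
    omega
  obtain ⟨w1, hw1U, hw1ne, hw01B⟩ := hkey
  have hw1T : w1 ∈ T := (Finset.mem_sdiff.mp hw1U).1
  have hw1S : w1 ∉ S := (Finset.mem_sdiff.mp hw1U).2
  -- unspoiled means the relevant edges are untouched
  have hunsp : ∀ w ∈ T, w ∉ S → s(u, w) ∉ B ∧ s(v, w) ∉ B := by
    intro w hwT hwS
    rw [hSdef, Finset.mem_filter] at hwS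
    push_neg at hwS
    exact hwS hwT
  -- adjacency in the edited graph
  set H := EditedGraph G Ep Em with hHdef
  have hadj : ∀ a b : V, G.Adj a b → s(a, b) ∉ B → s(a, b) ≠ s(u, v) → H.Adj a b := by
    intro a b hab hnB hne
    rw [hHdef, EditedGraph, SimpleGraph.fromEdgeSet_adj]
    refine ⟨⟨Or.inl hab, ?_⟩, hab.ne⟩
    intro hEmmem
    exact hnB (hmemB _ (by exact_mod_cast hEmmem) hne)
  have hne_uv : ∀ a ∈ T, ∀ b, (b = u ∨ b = v) → s(b, a) ≠ s(u, v) := by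
    intro a haT b hb h
    rw [Sym2.eq_iff] at h
    rcases hb with rfl | rfl
    · rcases h with ⟨h1, h2⟩ | ⟨h1, h2⟩
      · exact hvT (h2 ▸ haT)
      · exact huv.ne h1
    · rcases h with ⟨h1, h2⟩ | ⟨h1, h2⟩
      · exact huv.ne h1.symm
      · exact huT (h2 ▸ haT)
  have h01uv : s(w0, w1) ≠ s(u, v) := by
    intro h
    rw [Sym2.eq_iff] at h
    rcases h with ⟨h1, h2⟩ | ⟨h1, h2⟩
    · exact huT (h1 ▸ hw0T)
    · exact hvT (h1 ▸ hw0T)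
  -- all the adjacencies
  have hHuw0 : H.Adj u w0 :=
    hadj u w0 (hTuv w0 hw0T).1 (hunsp w0 hw0T hw0S).1 (hne_uv w0 hw0T u (Or.inl rfl))
  have hHvw0 : H.Adj v w0 :=
    hadj v w0 (hTuv w0 hw0T).2 (hunsp w0 hw0T hw0S).2 (hne_uv w0 hw0T v (Or.inr rfl))
  have hHuw1 : H.Adj u w1 :=
    hadj u w1 (hTuv w1 hw1T).1 (hunsp w1 hw1T hw1S).1 (hne_uv w1 hw1T u (Or.inl rfl))
  have hHvw1 : H.Adj v w1 :=
    hadj v w1 (hTuv w1 hw1T).2 (hunsp w1 hw1T hw1S).2 (hne_uv w1 hw1T v (Or.inr rfl))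
  have hG01 : G.Adj w0 w1 := hTclique (by exact_mod_cast hw0T) (by exact_mod_cast hw1T) hw1ne.symm
  have hH01 : H.Adj w0 w1 := hadj w0 w1 hG01 hw01B h01uv
  have hHnuv : ¬ H.Adj u v := by
    rw [hHdef, EditedGraph, SimpleGraph.fromEdgeSet_adj]
    rintro ⟨⟨-, h⟩, -⟩
    exact h (by exact_mod_cast hmem)
  exact hdf w0 w1 u v ⟨hw1ne.symm, hHuw0.ne', hHvw0.ne', hHuw1.ne', hHvw1.ne',
    huv.ne, hH01, hHuw0.symm, hHvw0.symm, hHuw1.symm, hHvw1.symm, hHnuv⟩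
end

section
/- Let (G, k) be a yes-instance of the diamond-free editing problem and let (E+, E−) be a solution of (G, k). If uv is a non-edge of G and there exist k+1 pairwise nonadjacent vertices in N(u) ∩ N(v), then uv ∉ E+. -/
variable {V : Type*}

/-!
Suppose the edge `uv` is added. Every `t ∈ T` is a common neighbour of `u` and `v` in `G`, so
either one of `ut`, `vt` is deleted, or `t` stays a common neighbour of the edge `uv` in the
edited graph. Diamond-freeness forces the surviving vertices to be pairwise adjacent there, and
since `T` is independent in `G` all these edges were added. The survivors thus cost at least as
many added edges as there are of them (a star from one survivor, plus `uv` itself), the others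
at least one deleted edge each, so the budget `k` would be exceeded by `|T| = k + 1`.
-/

open Finset

theorem card_le_card_of_forall_exists_sym2_mem {A B : Finset V} {E : Finset (Sym2 V)}
    (hAB : Disjoint A B) (h : ∀ a ∈ A, ∃ b ∈ B, s(b, a) ∈ E) : #A ≤ #E := by
  choose! f hfB hfE using h
  refine card_le_card_of_injOn (fun a => s(f a, a)) hfE fun a ha a' ha' heq => ?_
  have : a' ∈ s(f a, a) := by
    rw [show s(f a, a) = s(f a', a') from heq]
    exact Sym2.mem_mk_right _ _
  rcases Sym2.mem_iff.mp this with rfl | rfl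
  · exact absurd (hfB a ha) (disjoint_left.mp hAB ha')
  · rfl

theorem card_le_card_of_forall_sym2_mem [DecidableEq V] {S : Finset V} {E : Finset (Sym2 V)}
    {e : Sym2 V} (he : e ∈ E) (hSe : ∀ a ∈ S, a ∉ e)
    (hS : ∀ a ∈ S, ∀ b ∈ S, a ≠ b → s(a, b) ∈ E) : #S ≤ #E := by
  obtain rfl | ⟨a, ha⟩ := S.eq_empty_or_nonempty
  · simp
  -- `e` together with the star at `a` inside `S`
  have hstar : #(S.erase a) ≤ #(E.erase e) :=
    card_le_card_of_forall_exists_sym2_mem (B := {a})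
      (disjoint_singleton_right.mpr (notMem_erase a S))
      fun b hb => ⟨a, mem_singleton_self a, mem_erase.mpr
        ⟨fun hae => hSe a ha (hae ▸ Sym2.mem_mk_left _ _),
          hS a ha b (mem_of_mem_erase hb) (ne_of_mem_erase hb).symm⟩⟩
  rw [card_erase_of_mem ha, card_erase_of_mem he] at hstar
  have := card_pos.mpr ⟨a, ha⟩
  have := card_pos.mpr ⟨e, he⟩
  omega

theorem DiamondFree.adj_of_adj_of_adj {H : SimpleGraph V} (hH : DiamondFree H) {u v a b : V}
    (huv : H.Adj u v) (hua : H.Adj u a) (hva : H.Adj v a) (hub : H.Adj u b) (hvb : H.Adj v b)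
    (hab : a ≠ b) : H.Adj a b := by
  by_contra h
  exact hH u v a b ⟨huv.ne, hua.ne, hub.ne, hva.ne, hvb.ne, hab, huv, hua, hub, hva, hvb, h⟩

section EditedGraph

variable {G : SimpleGraph V} {Ep Em : Finset (Sym2 V)} {a b : V}

theorem editedGraph_adj : (EditedGraph G Ep Em).Adj a b ↔
    (G.Adj a b ∨ s(a, b) ∈ Ep) ∧ s(a, b) ∉ Em ∧ a ≠ b := by
  have := @SimpleGraph.Adj.ne _ G a b
  simp only [EditedGraph, SimpleGraph.fromEdgeSet_adj, Set.mem_sdiff, Set.mem_union,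
    SimpleGraph.mem_edgeSet, mem_coe]
  tauto

theorem mem_added_of_editedGraph_adj (h : (EditedGraph G Ep Em).Adj a b) (hG : ¬G.Adj a b) :
    s(a, b) ∈ Ep :=
  (editedGraph_adj.mp h).1.resolve_left hG

theorem mem_deleted_of_not_editedGraph_adj (hG : G.Adj a b) (h : ¬(EditedGraph G Ep Em).Adj a b) :
    s(a, b) ∈ Em := by
  by_contra hEm
  exact h (editedGraph_adj.mpr ⟨Or.inl hG, hEm, hG.ne⟩)

theorem editedGraph_adj_of_mem_added (hEp : ∀ e ∈ Ep, e ∉ G.edgeSet ∧ ¬e.IsDiag)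
    (hEm : ∀ e ∈ Em, e ∈ G.edgeSet) (h : s(a, b) ∈ Ep) : (EditedGraph G Ep Em).Adj a b :=
  editedGraph_adj.mpr ⟨Or.inr h, fun h' => (hEp _ h).1 (hEm _ h'),
    fun hab => (hEp _ h).2 (Sym2.mk_isDiag_iff.mpr hab)⟩

theorem card_le_card_add_card_of_mem_added (hEp : ∀ e ∈ Ep, e ∉ G.edgeSet ∧ ¬e.IsDiag)
    (hEm : ∀ e ∈ Em, e ∈ G.edgeSet) (hdf : DiamondFree (EditedGraph G Ep Em)) {u v : V}
    (huv : s(u, v) ∈ Ep) {T : Finset V}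
    (hTsub : (↑T : Set V) ⊆ G.neighborSet u ∩ G.neighborSet v)
    (hTindep : ∀ a ∈ T, ∀ b ∈ T, a ≠ b → ¬G.Adj a b) : #T ≤ #Ep + #Em := by
  classical
  set H := EditedGraph G Ep Em
  have hu (t) (ht : t ∈ T) : G.Adj u t := (hTsub ht).1
  have hv (t) (ht : t ∈ T) : G.Adj v t := (hTsub ht).2
  have hkept : #(T.filter fun t => H.Adj u t ∧ H.Adj v t) ≤ #Ep := by
    refine card_le_card_of_forall_sym2_mem huv (fun t ht hmem => ?_) fun a ha b hb hab => ?_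
    · rw [mem_filter] at ht
      rcases Sym2.mem_iff.mp hmem with rfl | rfl
      · exact (hu t ht.1).ne rfl
      · exact (hv t ht.1).ne rfl
    · rw [mem_filter] at ha hb
      exact mem_added_of_editedGraph_adj
        (hdf.adj_of_adj_of_adj (editedGraph_adj_of_mem_added hEp hEm huv)
          ha.2.1 ha.2.2 hb.2.1 hb.2.2 hab)
        (hTindep a ha.1 b hb.1 hab)
  have hlost : #(T.filter fun t => ¬(H.Adj u t ∧ H.Adj v t)) ≤ #Em := by
    refine card_le_card_of_forall_exists_sym2_mem (B := {u, v}) ?_ fun t ht => ?_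
    · refine disjoint_left.mpr fun t ht hmem => ?_
      rw [mem_filter] at ht
      rcases mem_insert.mp hmem with rfl | hmem
      · exact (hu t ht.1).ne rfl
      · exact (hv t ht.1).ne (mem_singleton.mp hmem).symm
    · rw [mem_filter, not_and_or] at ht
      rcases ht with ⟨htT, hnu | hnv⟩
      · exact ⟨u, by simp, mem_deleted_of_not_editedGraph_adj (hu t htT) hnu⟩
      · exact ⟨v, by simp, mem_deleted_of_not_editedGraph_adj (hv t htT) hnv⟩
  calc #T = #(T.filter fun t => H.Adj u t ∧ H.Adj v t)
        + #(T.filter fun t => ¬(H.Adj u t ∧ H.Adj v t)) :=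
      (card_filter_add_card_filter_not _).symm
    _ ≤ #Ep + #Em := add_le_add hkept hlost

end EditedGraph

theorem stmt1_general (G : SimpleGraph V) (k : ℕ)
    (Ep Em : Finset (Sym2 V)) (hsol : IsSolution G k Ep Em)
    (u v : V)
    (T : Finset V) (hTcard : T.card = k + 1)
    (hTsub : (↑T : Set V) ⊆ G.neighborSet u ∩ G.neighborSet v)
    (hTindep : ∀ a ∈ T, ∀ b ∈ T, a ≠ b → ¬ G.Adj a b) :
    s(u, v) ∉ Ep := by
  obtain ⟨hEp, hEm, hcard, hdf⟩ := hsol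
  intro huv
  have := card_le_card_add_card_of_mem_added hEp hEm hdf huv hTsub hTindep
  omega

/-- if `uv` is a non-edge of `G` and there are `k+1` pairwise
nonadjacent vertices in `N(u) ∩ N(v)`, then `uv ∉ E+` for any solution. -/
theorem stmt1 [Fintype V] [DecidableEq V] (G : SimpleGraph V) (k : ℕ)
    (hyes : YesInstance G k) (Ep Em : Finset (Sym2 V)) (hsol : IsSolution G k Ep Em)
    (u v : V) (hne : u ≠ v) (hnadj : ¬ G.Adj u v)
    (T : Finset V) (hTcard : T.card = k + 1)
    (hTsub : (↑T : Set V) ⊆ G.neighborSet u ∩ G.neighborSet v)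
    (hTindep : ∀ a ∈ T, ∀ b ∈ T, a ≠ b → ¬ G.Adj a b) :
    s(u, v) ∉ Ep :=
  stmt1_general G k Ep Em hsol u v T hTcard hTsub hTindep
end

section
/- Let (G, k) be a reduced instance of the diamond-free editing problem. Then any two distinct big maximal cliques of G share at most one vertex. -/
variable {V : Type*}

section Aux
variable {V : Type*}

lemma edgeWitness_of_clique {G : SimpleGraph V} {k : ℕ} {u v : V}
    {C : Finset V} (hC : G.IsClique (↑C : Set V)) (hcard : (k+1) + (k+1) ≤ C.card)
    (hu : ∀ w ∈ C, G.Adj u w) (hv : ∀ w ∈ C, G.Adj v w) :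
    EdgePairedWitness G k u v := by
  have hcard' : Fintype.card (Fin ((k+1)+(k+1))) ≤ C.card := by
    simpa using hcard
  obtain ⟨f, hf⟩ := Function.Embedding.exists_of_card_le_finset hcard'
  have hmem : ∀ i, f i ∈ C := fun i => hf ⟨i, rfl⟩
  let g : Fin (k+1) ⊕ Fin (k+1) ↪ V := (finSumFinEquiv.toEmbedding).trans f
  have hgmem : ∀ s, g s ∈ C := fun s => hmem _
  refine ⟨fun i => g (Sum.inl i), fun i => g (Sum.inr i), ?_, ?_, ?_⟩
  · have : Sum.elim (fun i => g (Sum.inl i)) (fun i => g (Sum.inr i)) = fun s => g s := by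
      funext s; cases s <;> rfl
    rw [this]
    exact g.injective
  · intro i
    exact ⟨hu _ (hgmem _), hv _ (hgmem _), hu _ (hgmem _), hv _ (hgmem _)⟩
  · intro i
    have hne : g (Sum.inl i) ≠ g (Sum.inr i) := by
      intro h
      exact absurd (g.injective h) (by simp)
    exact hC (hgmem (Sum.inl i)) (hgmem (Sum.inr i)) hne

lemma nonEdgeWitness_of_pairs {G : SimpleGraph V} {k : ℕ} {u v : V}
    (M : Finset (V × V)) (hcard : k + 1 ≤ M.card)
    (hadj : ∀ p ∈ M, G.Adj u p.1 ∧ G.Adj v p.1 ∧ G.Adj u p.2 ∧ G.Adj v p.2)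
    (hnadj : ∀ p ∈ M, ¬ G.Adj p.1 p.2)
    (hfst : ∀ p ∈ M, ∀ q ∈ M, p.1 = q.1 → p = q)
    (hsnd : ∀ p ∈ M, ∀ q ∈ M, p.2 = q.2 → p = q)
    (hcross : ∀ p ∈ M, ∀ q ∈ M, p.1 ≠ q.2) :
    NonEdgePairedWitness G k u v := by
  have hcard' : Fintype.card (Fin (k+1)) ≤ M.card := by simpa using hcard
  obtain ⟨f, hf⟩ := Function.Embedding.exists_of_card_le_finset hcard'
  have hmem : ∀ i, f i ∈ M := fun i => hf ⟨i, rfl⟩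
  refine ⟨fun i => (f i).1, fun i => (f i).2, ?_, ?_, ?_⟩
  · intro s t h
    cases s with
    | inl i => cases t with
      | inl j =>
        have : f i = f j := hfst _ (hmem i) _ (hmem j) h
        exact congrArg Sum.inl (f.injective this)
      | inr j => exact absurd h (hcross _ (hmem i) _ (hmem j))
    | inr i => cases t with
      | inl j => exact absurd h.symm (hcross _ (hmem j) _ (hmem i))
      | inr j =>
        have : f i = f j := hsnd _ (hmem i) _ (hmem j) h
        exact congrArg Sum.inr (f.injective this)
  · intro i
    exact hadj _ (hmem i)
  · intro i
    exact hnadj _ (hmem i)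

end Aux

/-- in a reduced instance, two distinct big maximal cliques share
at most one vertex. -/
theorem stmt3 [Fintype V] [DecidableEq V] (G : SimpleGraph V) (k : ℕ)
    (hred : Reduced G k)
    (K1 K2 : Finset V) (hK1 : IsMaxClique G K1) (hK2 : IsMaxClique G K2)
    (hbig1 : 3 * k + 2 ≤ K1.card) (hbig2 : 3 * k + 2 ≤ K2.card)
    (hne : K1 ≠ K2) :
    (K1 ∩ K2).card ≤ 1 := by
  classical
  by_contra hcon
  push_neg at hcon
  have hI2 : 2 ≤ (K1 ∩ K2).card := hcon
  obtain ⟨hc1, hm1⟩ := hK1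
  obtain ⟨hc2, hm2⟩ := hK2
  -- A and B nonempty
  have hAne : (K1 \ K2).Nonempty := by
    rw [Finset.sdiff_nonempty]
    intro hsub
    exact hne (hm1 K2 hc2 hsub)
  -- adjacency within cliques
  have hadj1 : ∀ x ∈ K1, ∀ w ∈ K1, x ≠ w → G.Adj x w := fun x hx w hw hxw => hc1 hx hw hxw
  have hadj2 : ∀ x ∈ K2, ∀ w ∈ K2, x ≠ w → G.Adj x w := fun x hx w hw hxw => hc2 hx hw hxw
  -- every vertex of K1 \ K2 has a non-neighbor in K2 \ K1
  have hnonnb : ∀ a ∈ K1 \ K2, ∃ y ∈ K2 \ K1, ¬ G.Adj a y := by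
    intro a ha
    obtain ⟨haK1, haK2⟩ := Finset.mem_sdiff.mp ha
    by_contra hcon2
    push_neg at hcon2
    have hall : ∀ y ∈ K2, G.Adj a y := by
      intro y hy
      by_cases hyK1 : y ∈ K1
      · exact hadj1 a haK1 y hyK1 (fun h => haK2 (h ▸ hy))
      · exact hcon2 y (Finset.mem_sdiff.mpr ⟨hy, hyK1⟩)
    have hclique : G.IsClique (↑(insert a K2) : Set V) := by
      rw [Finset.coe_insert]
      exact hc2.insert (fun y hy hay => hall y hy)
    have := hm2 (insert a K2) hclique (Finset.subset_insert a K2)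
    exact haK2 (this ▸ Finset.mem_insert_self a K2)
  -- Case 1 : big intersection
  by_cases hbigI : (k+1) + (k+1) ≤ (K1 ∩ K2).card
  · obtain ⟨a, ha⟩ := hAne
    obtain ⟨haK1, haK2⟩ := Finset.mem_sdiff.mp ha
    obtain ⟨y, hy, hay⟩ := hnonnb a ha
    obtain ⟨hyK2, hyK1⟩ := Finset.mem_sdiff.mp hy
    have hayne : a ≠ y := fun h => haK2 (h ▸ hyK2)
    refine hred.1 a y hayne hay ?_
    refine edgeWitness_of_clique (hc1.subset ?_) hbigI ?_ ?_
    · intro w hw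
      exact Finset.mem_coe.mpr (Finset.mem_of_mem_inter_left (Finset.mem_coe.mp hw))
    · intro w hw
      obtain ⟨hw1, hw2⟩ := Finset.mem_inter.mp hw
      exact hadj1 a haK1 w hw1 (fun h => haK2 (h ▸ hw2))
    · intro w hw
      obtain ⟨hw1, hw2⟩ := Finset.mem_inter.mp hw
      exact hadj2 y hyK2 w hw2 (fun h => hyK1 (h ▸ hw1))
  · push_neg at hbigI
    -- |A| ≥ k+1 and |B| ≥ k+1
    have hK1split : (K1 \ K2).card + (K1 ∩ K2).card = K1.card :=
      Finset.card_sdiff_add_card_inter K1 K2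
    have hK2split : (K2 \ K1).card + (K1 ∩ K2).card = K2.card := by
      rw [Finset.inter_comm]
      exact Finset.card_sdiff_add_card_inter K2 K1
    have hAcard : k + 1 ≤ (K1 \ K2).card := by omega
    have hBcard : k + 1 ≤ (K2 \ K1).card := by omega
    -- maximal matching of non-edges between A and B
    set Valid : Finset (V × V) → Prop := fun M =>
      (∀ p ∈ M, p.1 ∈ K1 \ K2 ∧ p.2 ∈ K2 \ K1 ∧ ¬ G.Adj p.1 p.2) ∧
      (∀ p ∈ M, ∀ q ∈ M, p.1 = q.1 → p = q) ∧
      (∀ p ∈ M, ∀ q ∈ M, p.2 = q.2 → p = q) with hValid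
    have hS : (Finset.univ.filter Valid : Finset (Finset (V × V))).Nonempty := by
      refine ⟨∅, Finset.mem_filter.mpr ⟨Finset.mem_univ _, ?_, ?_, ?_⟩⟩ <;>
        intro p hp <;> exact absurd hp (Finset.notMem_empty p)
    obtain ⟨M, hMS, hMmax⟩ := Finset.exists_max_image _ Finset.card hS
    have hMval : Valid M := (Finset.mem_filter.mp hMS).2
    obtain ⟨hMmem, hMfst, hMsnd⟩ := hMval
    -- cross distinctness
    have hMcross : ∀ p ∈ M, ∀ q ∈ M, p.1 ≠ q.2 := by
      intro p hp q hq h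
      have h1 := (hMmem p hp).1
      have h2 := (hMmem q hq).2.1
      rw [h] at h1
      exact (Finset.mem_sdiff.mp h1).2 (Finset.mem_sdiff.mp h2).1
    -- maximality: unmatched pairs are adjacent
    have hext : ∀ a ∈ K1 \ K2, a ∉ M.image Prod.fst →
        ∀ b ∈ K2 \ K1, b ∉ M.image Prod.snd → G.Adj a b := by
      intro a ha hanm b hb hbnm
      by_contra hab
      have habM : (a, b) ∉ M := fun h => hanm (Finset.mem_image_of_mem Prod.fst h)
      have hval' : Valid (insert (a, b) M) := by
        refine ⟨?_, ?_, ?_⟩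
        · intro p hp
          rcases Finset.mem_insert.mp hp with h | h
          · rw [h]; exact ⟨ha, hb, hab⟩
          · exact hMmem p h
        · intro p hp q hq hpq
          rcases Finset.mem_insert.mp hp with h | h <;>
            rcases Finset.mem_insert.mp hq with h' | h'
          · rw [h, h']
          · exfalso; rw [h] at hpq
            exact hanm (by rw [show a = q.1 from hpq]; exact Finset.mem_image_of_mem Prod.fst h')
          · exfalso; rw [h'] at hpq
            exact hanm (by rw [show a = p.1 from hpq.symm]; exact Finset.mem_image_of_mem Prod.fst h)
          · exact hMfst p h q h' hpq
        · intro p hp q hq hpq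
          rcases Finset.mem_insert.mp hp with h | h <;>
            rcases Finset.mem_insert.mp hq with h' | h'
          · rw [h, h']
          · exfalso; rw [h] at hpq
            exact hbnm (by rw [show b = q.2 from hpq]; exact Finset.mem_image_of_mem Prod.snd h')
          · exfalso; rw [h'] at hpq
            exact hbnm (by rw [show b = p.2 from hpq.symm]; exact Finset.mem_image_of_mem Prod.snd h)
          · exact hMsnd p h q h' hpq
      have hmem' : insert (a, b) M ∈ Finset.univ.filter Valid :=
        Finset.mem_filter.mpr ⟨Finset.mem_univ _, hval'⟩
      have hle := hMmax _ hmem'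
      rw [Finset.card_insert_of_notMem habM] at hle
      omega
    by_cases hMcard : k + 1 ≤ M.card
    · -- rule (b) violated
      obtain ⟨u, hu, v, hv, huv⟩ := Finset.one_lt_card.mp (by omega : 1 < (K1 ∩ K2).card)
      obtain ⟨huK1, huK2⟩ := Finset.mem_inter.mp hu
      obtain ⟨hvK1, hvK2⟩ := Finset.mem_inter.mp hv
      refine hred.2 u v (hadj1 u huK1 v hvK1 huv) ?_
      refine nonEdgeWitness_of_pairs M hMcard ?_ (fun p hp => (hMmem p hp).2.2) hMfst hMsnd hMcross
      intro p hp
      obtain ⟨hp1, hp2, -⟩ := hMmem p hp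
      obtain ⟨hp1K1, hp1K2⟩ := Finset.mem_sdiff.mp hp1
      obtain ⟨hp2K2, hp2K1⟩ := Finset.mem_sdiff.mp hp2
      exact ⟨hadj1 u huK1 p.1 hp1K1 (fun h => hp1K2 (h ▸ huK2)),
        hadj1 v hvK1 p.1 hp1K1 (fun h => hp1K2 (h ▸ hvK2)),
        hadj2 u huK2 p.2 hp2K2 (fun h => hp2K1 (h ▸ huK1)),
        hadj2 v hvK2 p.2 hp2K2 (fun h => hp2K1 (h ▸ hvK1))⟩
    · push_neg at hMcard
      -- unmatched vertices
      have hAim : (M.image Prod.fst).card ≤ k := le_trans (Finset.card_image_le) (by omega)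
      have hBim : (M.image Prod.snd).card ≤ k := le_trans (Finset.card_image_le) (by omega)
      have hA'card : 1 ≤ ((K1 \ K2) \ M.image Prod.fst).card := by
        have := Finset.le_card_sdiff (M.image Prod.fst) (K1 \ K2)
        omega
      have hB'card : (K2 \ K1).card ≤ ((K2 \ K1) \ M.image Prod.snd).card + k := by
        have := Finset.le_card_sdiff (M.image Prod.snd) (K2 \ K1)
        omega
      obtain ⟨a, ha'⟩ := Finset.card_pos.mp (show 0 < ((K1 \ K2) \ M.image Prod.fst).card by omega)
      obtain ⟨haA, hanm⟩ := Finset.mem_sdiff.mp ha'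
      obtain ⟨haK1, haK2⟩ := Finset.mem_sdiff.mp haA
      obtain ⟨y, hy, hay⟩ := hnonnb a haA
      obtain ⟨hyK2, hyK1⟩ := Finset.mem_sdiff.mp hy
      have hayne : a ≠ y := fun h => haK2 (h ▸ hyK2)
      -- y is matched
      have hyB' : y ∉ (K2 \ K1) \ M.image Prod.snd := by
        intro hy'
        obtain ⟨-, hynm⟩ := Finset.mem_sdiff.mp hy'
        exact hay (hext a haA hanm y hy hynm)
      set C : Finset V := ((K2 \ K1) \ M.image Prod.snd) ∪ (K1 ∩ K2) with hCdef
      have hCsub : C ⊆ K2 := by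
        intro w hw
        rcases Finset.mem_union.mp hw with h | h
        · exact (Finset.mem_sdiff.mp (Finset.mem_sdiff.mp h).1).1
        · exact (Finset.mem_inter.mp h).2
      have hCdisj : Disjoint ((K2 \ K1) \ M.image Prod.snd) (K1 ∩ K2) := by
        rw [Finset.disjoint_left]
        intro w hw hw'
        exact (Finset.mem_sdiff.mp (Finset.mem_sdiff.mp hw).1).2 (Finset.mem_inter.mp hw').1
      have hCcard : (k+1) + (k+1) ≤ C.card := by
        rw [hCdef, Finset.card_union_of_disjoint hCdisj]
        omega
      refine hred.1 a y hayne hay ?_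
      refine edgeWitness_of_clique (hc2.subset (fun w hw => hCsub hw)) hCcard ?_ ?_
      · intro w hw
        rcases Finset.mem_union.mp hw with h | h
        · obtain ⟨hwB, hwnm⟩ := Finset.mem_sdiff.mp h
          exact hext a haA hanm w hwB hwnm
        · obtain ⟨hw1, hw2⟩ := Finset.mem_inter.mp h
          exact hadj1 a haK1 w hw1 (fun heq => haK2 (heq ▸ hw2))
      · intro w hw
        have hwK2 : w ∈ K2 := hCsub hw
        refine hadj2 y hyK2 w hwK2 ?_
        intro heq
        rcases Finset.mem_union.mp hw with h | h
        · exact hyB' (heq ▸ h)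
        · exact hyK1 (heq ▸ (Finset.mem_inter.mp h).1)
end

section
/- Let (G, k) be a reduced yes-instance of the diamond-free editing problem and let (E+, E−) be a solution of (G, k). Then every big maximal clique of G is also a maximal clique of the edited graph G △ E±. -/
variable {V : Type*}

/-- The endpoints of a `Sym2` element as a finset. -/
private def sym2Fin [DecidableEq V] : Sym2 V → Finset V :=
  Sym2.lift ⟨fun a b => {a, b}, fun a b => Finset.pair_comm a b⟩

private lemma mem_sym2Fin [DecidableEq V] {e : Sym2 V} {z : V} :
    z ∈ sym2Fin e ↔ z ∈ e := by
  induction e using Sym2.ind with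
  | _ a b => simp [sym2Fin, Sym2.mem_iff]

private lemma card_sym2Fin [DecidableEq V] (e : Sym2 V) : (sym2Fin e).card ≤ 2 := by
  induction e using Sym2.ind with
  | _ a b =>
    simp only [sym2Fin, Sym2.lift_mk]
    exact (Finset.card_insert_le _ _).trans (by simp)

private lemma edited_adj (G : SimpleGraph V) (Ep Em : Finset (Sym2 V)) (u v : V) :
    (EditedGraph G Ep Em).Adj u v ↔
      ((s(u, v) ∈ G.edgeSet ∨ s(u, v) ∈ Ep) ∧ s(u, v) ∉ Em) ∧ u ≠ v := by
  simp only [EditedGraph, SimpleGraph.fromEdgeSet_adj, Set.mem_diff, Set.mem_union,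
    Finset.mem_coe]

private lemma witness_of_big {G : SimpleGraph V} {k : ℕ} {w u : V} {S : Finset V}
    (hcard : (k + 1) + (k + 1) ≤ S.card)
    (hadj : ∀ z ∈ S, G.Adj w z ∧ G.Adj u z)
    (hpair : ∀ z1 ∈ S, ∀ z2 ∈ S, z1 ≠ z2 → G.Adj z1 z2) :
    EdgePairedWitness G k w u := by
  obtain ⟨S', hsub, hcardS'⟩ := Finset.exists_subset_card_eq hcard
  let e := S'.equivFin
  let f : Fin ((k + 1) + (k + 1)) → V := fun i => (e.symm (Fin.cast hcardS'.symm i) : V)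
  have hf : Function.Injective f := by
    intro i j hij
    have := e.symm.injective (Subtype.ext hij)
    exact Fin.val_injective (by simpa using congrArg Fin.val this)
  have hfm : ∀ i, f i ∈ S := fun i => hsub (e.symm (Fin.cast hcardS'.symm i)).2
  refine ⟨fun i => f (finSumFinEquiv (Sum.inl i)), fun i => f (finSumFinEquiv (Sum.inr i)),
      ?_, ?_, ?_⟩
  · have : (Sum.elim (fun i => f (finSumFinEquiv (Sum.inl i)))
        (fun i => f (finSumFinEquiv (Sum.inr i)))) = f ∘ finSumFinEquiv := by
      funext s; cases s <;> rfl
    rw [this]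
    exact hf.comp finSumFinEquiv.injective
  · intro i
    obtain ⟨h1, h2⟩ := hadj _ (hfm (finSumFinEquiv (Sum.inl i)))
    obtain ⟨h3, h4⟩ := hadj _ (hfm (finSumFinEquiv (Sum.inr i)))
    exact ⟨h1, h2, h3, h4⟩
  · intro i
    refine hpair _ (hfm _) _ (hfm _) fun h => ?_
    have := finSumFinEquiv.injective (hf h)
    simp at this

/-- in a reduced yes-instance, every big maximal clique of `G`
remains a maximal clique of the edited graph. -/
theorem stmt4 [Fintype V] [DecidableEq V] (G : SimpleGraph V) (k : ℕ)
    (hred : Reduced G k) (Ep Em : Finset (Sym2 V)) (hsol : IsSolution G k Ep Em)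
    (K : Finset V) (hK : IsMaxClique G K) (hbig : 3 * k + 2 ≤ K.card) :
    IsMaxClique (EditedGraph G Ep Em) K := by
  classical
  obtain ⟨hEp, hEm, hcard, hdf⟩ := hsol
  -- Claim A: K remains a clique in the edited graph.
  have hclique : (EditedGraph G Ep Em).IsClique (↑K : Set V) := by
    intro u hu v hv huv
    by_contra hne
    have hGuv : G.Adj u v := hK.1 hu hv huv
    have hmemEm : s(u, v) ∈ Em := by
      by_contra hnot
      exact hne ((edited_adj G Ep Em u v).mpr
        ⟨⟨Or.inl (G.mem_edgeSet.mpr hGuv), hnot⟩, huv⟩)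
    -- the set of vertices touched by edits other than s(u,v)
    set F : Finset (Sym2 V) := Ep ∪ Em.erase s(u, v) with hF
    set B : Finset V := F.biUnion sym2Fin with hB
    have hFcard : F.card ≤ Ep.card + (Em.card - 1) := by
      refine (Finset.card_union_le _ _).trans ?_
      have := Finset.card_erase_of_mem hmemEm
      omega
    have hBcard : B.card ≤ 2 * F.card := by
      rw [hB]
      have := Finset.card_biUnion_le_card_mul F sym2Fin 2 fun e _ => card_sym2Fin e
      omega
    have hEm1 : 1 ≤ Em.card := Finset.card_pos.mpr ⟨_, hmemEm⟩
    set A : Finset V := {u, v} ∪ B with hA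
    have hAcard : A.card ≤ 2 + B.card := by
      refine (Finset.card_union_le _ _).trans ?_
      have : ({u, v} : Finset V).card ≤ 2 :=
        (Finset.card_insert_le _ _).trans (by simp)
      omega
    have hKA : 2 ≤ (K \ A).card := by
      have := Finset.card_le_card_sdiff_add_card (s := K) (t := A)
      omega
    obtain ⟨x, hx, y, hy, hxy⟩ := Finset.one_lt_card.mp hKA
    have hxK : x ∈ K := (Finset.mem_sdiff.mp hx).1
    have hyK : y ∈ K := (Finset.mem_sdiff.mp hy).1
    have hxA : x ∉ A := (Finset.mem_sdiff.mp hx).2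
    have hyA : y ∉ A := (Finset.mem_sdiff.mp hy).2
    have hxu : x ≠ u := fun h => hxA (by simp [hA, h])
    have hxv : x ≠ v := fun h => hxA (by simp [hA, h])
    have hyu : y ≠ u := fun h => hyA (by simp [hA, h])
    have hyv : y ≠ v := fun h => hyA (by simp [hA, h])
    have hxB : x ∉ B := fun h => hxA (by simp [hA, h])
    have hyB : y ∉ B := fun h => hyA (by simp [hA, h])
    -- an edge of K with an endpoint outside B and different from s(u,v) survives
    have hsurv : ∀ a b : V, a ∈ K → b ∈ K → a ≠ b → a ∉ B → s(a, b) ≠ s(u, v) →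
        (EditedGraph G Ep Em).Adj a b := by
      intro a b ha hb hab haB hne'
      refine (edited_adj G Ep Em a b).mpr ⟨⟨Or.inl (G.mem_edgeSet.mpr (hK.1 ha hb hab)), ?_⟩, hab⟩
      intro hmem
      exact haB (Finset.mem_biUnion.mpr ⟨s(a, b),
        Finset.mem_union_right _ (Finset.mem_erase.mpr ⟨hne', hmem⟩),
        mem_sym2Fin.mpr (Sym2.mem_mk_left a b)⟩)
    have hne_xu : s(x, u) ≠ s(u, v) := fun h => by
      rcases Sym2.eq_iff.mp h with ⟨h1, _⟩ | ⟨h1, _⟩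
      · exact hxu h1
      · exact hxv h1
    have hne_xv : s(x, v) ≠ s(u, v) := fun h => by
      rcases Sym2.eq_iff.mp h with ⟨h1, _⟩ | ⟨h1, _⟩
      · exact hxu h1
      · exact hxv h1
    have hne_yu : s(y, u) ≠ s(u, v) := fun h => by
      rcases Sym2.eq_iff.mp h with ⟨h1, _⟩ | ⟨h1, _⟩
      · exact hyu h1
      · exact hyv h1
    have hne_yv : s(y, v) ≠ s(u, v) := fun h => by
      rcases Sym2.eq_iff.mp h with ⟨h1, _⟩ | ⟨h1, _⟩
      · exact hyu h1
      · exact hyv h1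
    have hne_xy : s(x, y) ≠ s(u, v) := fun h => by
      rcases Sym2.eq_iff.mp h with ⟨h1, _⟩ | ⟨h1, _⟩
      · exact hxu h1
      · exact hxv h1
    exact hdf x y u v ⟨hxy, hxu, hxv, hyu, hyv, huv,
      hsurv x y hxK hyK hxy hxB hne_xy,
      hsurv x u hxK hu hxu hxB hne_xu,
      hsurv x v hxK hv hxv hxB hne_xv,
      hsurv y u hyK hu hyu hyB hne_yu,
      hsurv y v hyK hv hyv hyB hne_yv,
      hne⟩
  refine ⟨hclique, fun K' hK' hsub => ?_⟩
  by_contra hneK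
  obtain ⟨w, hwK', hwK⟩ := Finset.exists_of_ssubset (lt_of_le_of_ne hsub hneK)
  -- there is a vertex of K not G-adjacent to w
  have hu : ∃ u ∈ K, ¬ G.Adj w u := by
    by_contra h
    push_neg at h
    have hclK : G.IsClique (↑(insert w K) : Set V) := by
      intro a ha b hb hab
      simp only [Finset.coe_insert, Set.mem_insert_iff, Finset.mem_coe] at ha hb
      rcases ha with ha | ha <;> rcases hb with hb | hb
      · exact absurd (ha.trans hb.symm) hab
      · exact ha ▸ h b hb
      · exact (hb ▸ h a ha).symm
      · exact hK.1 ha hb hab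
    have := hK.2 (insert w K) hclK (Finset.subset_insert _ _)
    exact hwK (this ▸ Finset.mem_insert_self w K)
  obtain ⟨u, huK, hwu⟩ := hu
  have hwune : w ≠ u := fun h => hwK (h ▸ huK)
  -- S : common G-neighbors of w inside K
  set S : Finset V := K.filter (fun z => G.Adj w z) with hS
  have hScard : S.card ≤ 2 * k + 1 := by
    by_contra hbigS
    push_neg at hbigS
    have : (k + 1) + (k + 1) ≤ S.card := by omega
    refine (hred.1 w u hwune hwu) (witness_of_big this ?_ ?_)
    · intro z hz
      have hzK := (Finset.mem_filter.mp hz).1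
      have hwz := (Finset.mem_filter.mp hz).2
      have hzu : z ≠ u := fun h => hwu (h ▸ hwz)
      exact ⟨hwz, hK.1 huK hzK hzu.symm⟩
    · intro z1 hz1 z2 hz2 hne'
      exact hK.1 (Finset.mem_filter.mp hz1).1 (Finset.mem_filter.mp hz2).1 hne'
  set T : Finset V := K \ S with hT
  have hTcard : k + 1 ≤ T.card := by
    rw [hT]
    have := Finset.card_le_card_sdiff_add_card (s := K) (t := S)
    omega
  -- each vertex of T needs an added edge to w
  have hmap : ∀ z ∈ T, s(w, z) ∈ Ep := by
    intro z hz
    have hzK : z ∈ K := (Finset.mem_sdiff.mp hz).1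
    have hwz : ¬ G.Adj w z := by
      intro h
      exact (Finset.mem_sdiff.mp hz).2 (Finset.mem_filter.mpr ⟨hzK, h⟩)
    have hwzne : w ≠ z := fun h => hwK (h ▸ hzK)
    have hadj : (EditedGraph G Ep Em).Adj w z := hK' hwK' (hsub hzK) hwzne
    rcases ((edited_adj G Ep Em w z).mp hadj).1.1 with h | h
    · exact absurd (G.mem_edgeSet.mp h) hwz
    · exact h
  have hinj : Set.InjOn (fun z => s(w, z)) ↑T := by
    intro z1 hz1 z2 hz2 h
    simp only at h
    rcases Sym2.eq_iff.mp h with ⟨_, h2⟩ | ⟨_, h2⟩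
    · exact h2
    · exact absurd (h2 ▸ (Finset.mem_sdiff.mp hz1).1) hwK
  have := Finset.card_le_card_of_injOn (fun z => s(w, z)) hmap hinj
  omega
end

section
/- A vertex v of a graph G lies in some type-I maximal clique of G if and only if v is contained in some induced diamond of G. -/
variable {V : Type*}

lemma exists_maxclique_ext [Fintype V] [DecidableEq V] (G : SimpleGraph V)
    (s : Finset V) (hs : G.IsClique (↑s : Set V)) :
    ∃ K : Finset V, IsMaxClique G K ∧ s ⊆ K := by
  classical
  let T : Finset (Finset V) :=
    Finset.univ.filter (fun K => G.IsClique (↑K : Set V) ∧ s ⊆ K)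
  have hsT : s ∈ T := by simp [T, hs]
  obtain ⟨K, hKT, hmax⟩ := T.exists_max_image Finset.card ⟨s, hsT⟩
  simp only [T, Finset.mem_filter] at hKT
  refine ⟨K, ⟨hKT.2.1, ?_⟩, hKT.2.2⟩
  intro K' hK' hsub
  have hK'T : K' ∈ T := by
    simp only [T, Finset.mem_filter]
    exact ⟨Finset.mem_univ _, hK', hKT.2.2.trans hsub⟩
  exact Finset.eq_of_subset_of_card_le hsub (hmax K' hK'T)

lemma exists_nonadj_of_notMem [DecidableEq V] (G : SimpleGraph V)
    {K : Finset V} (hK : IsMaxClique G K) {x : V} (hx : x ∉ K) :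
    ∃ y ∈ K, ¬ G.Adj x y := by
  by_contra h
  push_neg at h
  have hclique : G.IsClique (↑(insert x K) : Set V) := by
    intro a ha b hb hab
    simp only [Finset.coe_insert, Set.mem_insert_iff, Finset.mem_coe] at ha hb
    rcases ha with rfl | ha
    · rcases hb with rfl | hb
      · exact absurd rfl hab
      · exact h b hb
    · rcases hb with rfl | hb
      · exact (h a ha).symm
      · exact hK.1 (Finset.mem_coe.mpr ha) (Finset.mem_coe.mpr hb) hab
  have := hK.2 _ hclique (Finset.subset_insert x K)
  exact hx (this ▸ Finset.mem_insert_self x K)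

/-- a vertex lies in some type-I maximal clique of `G` iff it is
contained in some induced diamond of `G`. -/
theorem stmt5 [Fintype V] [DecidableEq V] (G : SimpleGraph V) (v : V) :
    (∃ K : Finset V, TypeI G K ∧ v ∈ K) ↔
    (∃ a b c d : V, IsDiamond G a b c d ∧ (v = a ∨ v = b ∨ v = c ∨ v = d)) := by
  constructor
  · rintro ⟨K, ⟨hKmax, K', hK'max, hne, hcard⟩, hvK⟩
    -- choose u w distinct in K ∩ K' (with u = v if v ∈ K'), and x ∈ K \ K'
    have hKnotsub : ¬ K ⊆ K' := by
      intro hsub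
      exact hne (hKmax.2 K' hK'max.1 hsub).symm
    obtain ⟨u, w, x, hu, hw, hx, huw, hvux⟩ :
        ∃ u w x : V, u ∈ K ∩ K' ∧ w ∈ K ∩ K' ∧ (x ∈ K ∧ x ∉ K') ∧ u ≠ w ∧
          (v = u ∨ v = x) := by
      by_cases hv' : v ∈ K'
      · obtain ⟨w, hw, hwv⟩ := Finset.exists_mem_ne (s := K ∩ K') (by omega) v
        obtain ⟨x, hxK, hxK'⟩ := Finset.not_subset.mp hKnotsub
        exact ⟨v, w, x, Finset.mem_inter.mpr ⟨hvK, hv'⟩, hw, ⟨hxK, hxK'⟩,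
          fun h => hwv h.symm, Or.inl rfl⟩
      · obtain ⟨u, hu, w, hw, huw⟩ := Finset.one_lt_card.mp (show 1 < (K ∩ K').card by omega)
        exact ⟨u, w, v, hu, hw, ⟨hvK, hv'⟩, huw, Or.inr rfl⟩
    obtain ⟨huK, huK'⟩ := Finset.mem_inter.mp hu
    obtain ⟨hwK, hwK'⟩ := Finset.mem_inter.mp hw
    obtain ⟨hxK, hxK'⟩ := hx
    obtain ⟨y, hyK', hxy⟩ := exists_nonadj_of_notMem G hK'max hxK'
    have hux : u ≠ x := fun h => hxK' (h ▸ huK')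
    have hwx : w ≠ x := fun h => hxK' (h ▸ hwK')
    have hxyne : x ≠ y := fun h => hxK' (h ▸ hyK')
    have hAuw : G.Adj u w := hKmax.1 (Finset.mem_coe.mpr huK) (Finset.mem_coe.mpr hwK) huw
    have hAux : G.Adj u x := hKmax.1 (Finset.mem_coe.mpr huK) (Finset.mem_coe.mpr hxK) hux
    have hAwx : G.Adj w x := hKmax.1 (Finset.mem_coe.mpr hwK) (Finset.mem_coe.mpr hxK) hwx
    have huy : u ≠ y := fun h => hxy (h ▸ hAux.symm)
    have hwy : w ≠ y := fun h => hxy (h ▸ hAwx.symm)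
    have hAuy : G.Adj u y := hK'max.1 (Finset.mem_coe.mpr huK') (Finset.mem_coe.mpr hyK') huy
    have hAwy : G.Adj w y := hK'max.1 (Finset.mem_coe.mpr hwK') (Finset.mem_coe.mpr hyK') hwy
    refine ⟨u, w, x, y, ⟨huw, hux, huy, hwx, hwy, hxyne,
      hAuw, hAux, hAuy, hAwx, hAwy, hxy⟩, ?_⟩
    rcases hvux with rfl | rfl
    · exact Or.inl rfl
    · exact Or.inr (Or.inr (Or.inl rfl))
  · rintro ⟨a, b, c, d, ⟨hab, hac, had, hbc, hbd, hcd,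
      hAab, hAac, hAad, hAbc, hAbd, hNcd⟩, hv⟩
    have hs1 : G.IsClique (↑({a, b, c} : Finset V) : Set V) := by
      intro p hp q hq hpq
      simp only [Finset.coe_insert, Set.mem_insert_iff, Finset.coe_singleton,
        Set.mem_singleton_iff] at hp hq
      rcases hp with rfl | rfl | rfl <;> rcases hq with rfl | rfl | rfl <;>
        first
          | exact absurd rfl hpq
          | assumption
          | exact hAab.symm
          | exact hAac.symm
          | exact hAbc.symm
    have hs2 : G.IsClique (↑({a, b, d} : Finset V) : Set V) := by
      intro p hp q hq hpq
      simp only [Finset.coe_insert, Set.mem_insert_iff, Finset.coe_singleton,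
        Set.mem_singleton_iff] at hp hq
      rcases hp with rfl | rfl | rfl <;> rcases hq with rfl | rfl | rfl <;>
        first
          | exact absurd rfl hpq
          | assumption
          | exact hAab.symm
          | exact hAad.symm
          | exact hAbd.symm
    obtain ⟨K1, hK1max, hs1K1⟩ := exists_maxclique_ext G {a, b, c} hs1
    obtain ⟨K2, hK2max, hs2K2⟩ := exists_maxclique_ext G {a, b, d} hs2
    have haK1 : a ∈ K1 := hs1K1 (by simp)
    have hbK1 : b ∈ K1 := hs1K1 (by simp)
    have hcK1 : c ∈ K1 := hs1K1 (by simp)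
    have haK2 : a ∈ K2 := hs2K2 (by simp)
    have hbK2 : b ∈ K2 := hs2K2 (by simp)
    have hdK2 : d ∈ K2 := hs2K2 (by simp)
    have hK12 : K1 ≠ K2 := by
      intro h
      exact hNcd (hK1max.1 (Finset.mem_coe.mpr hcK1)
        (Finset.mem_coe.mpr (h ▸ hdK2)) hcd)
    have habsub : ({a, b} : Finset V) ⊆ K1 ∩ K2 := by
      intro p hp
      simp only [Finset.mem_insert, Finset.mem_singleton] at hp
      rcases hp with rfl | rfl <;> exact Finset.mem_inter.mpr (by constructor <;> assumption)
    have hcard2 : 2 ≤ (K1 ∩ K2).card := by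
      calc 2 = ({a, b} : Finset V).card := by
              rw [Finset.card_insert_of_notMem (by simpa using hab), Finset.card_singleton]
           _ ≤ (K1 ∩ K2).card := Finset.card_le_card habsub
    rcases hv with rfl | rfl | rfl | rfl
    · exact ⟨K1, ⟨hK1max, K2, hK2max, hK12.symm, hcard2⟩, haK1⟩
    · exact ⟨K1, ⟨hK1max, K2, hK2max, hK12.symm, hcard2⟩, hbK1⟩
    · exact ⟨K1, ⟨hK1max, K2, hK2max, hK12.symm, hcard2⟩, hcK1⟩
    · exact ⟨K2, ⟨hK2max, K1, hK1max, hK12, by rwa [Finset.inter_comm]⟩, hdK2⟩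
end

section
/- Let G be a diamond-free graph and let U be a set of vertices of G such that every vertex of V(G) \ U is adjacent to at most one vertex of U. Let E+ be a set of non-edges of G with both ends in U and let E− be a set of edges of G with both ends in U. If the graph obtained from the induced subgraph G[U] by adding the edges E+ and deleting the edges E− is diamond-free, then the graph G △ E±, obtained from G by adding all edges of E+ and deleting all edges of E−, is diamond-free. -/
variable {V : Type*}

/-- if `G` is diamond-free, every vertex outside `U` has at most
one neighbor in `U`, all edits have both ends in `U`, and the edited induced
subgraph on `U` is diamond-free, then the whole edited graph is diamond-free. -/
theorem stmt6 [Fintype V] [DecidableEq V] (G : SimpleGraph V)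
    (hG : DiamondFree G) (U : Set V)
    (hU : ∀ w ∉ U, ∀ a ∈ U, ∀ b ∈ U, G.Adj w a → G.Adj w b → a = b)
    (Ep Em : Finset (Sym2 V))
    (hEp : ∀ e ∈ Ep, e ∉ G.edgeSet ∧ ¬ e.IsDiag ∧ ∀ w ∈ e, w ∈ U)
    (hEm : ∀ e ∈ Em, e ∈ G.edgeSet ∧ ∀ w ∈ e, w ∈ U)
    (hind : DiamondFree ((EditedGraph G Ep Em).induce U)) :
    DiamondFree (EditedGraph G Ep Em) := by
  
  intro u v x y h
  obtain ⟨huv, hux, huy, hvx, hvy, hxy, auv, aux, auy, avx, avy, naxy⟩ := h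
  have key : ∀ a b : V, (a ∉ U ∨ b ∉ U) →
      ((EditedGraph G Ep Em).Adj a b ↔ G.Adj a b) := by
    intro a b hab
    have hp : s(a,b) ∉ (Ep : Set (Sym2 V)) := by
      intro h
      rcases hEp _ h with ⟨_, _, hw⟩
      rcases hab with h' | h'
      · exact h' (hw a (by simp))
      · exact h' (hw b (by simp))
    have hm : s(a,b) ∉ (Em : Set (Sym2 V)) := by
      intro h
      rcases hEm _ h with ⟨_, hw⟩
      rcases hab with h' | h'
      · exact h' (hw a (by simp))
      · exact h' (hw b (by simp))
    constructor
    · rintro hadj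
      rw [EditedGraph, SimpleGraph.fromEdgeSet_adj] at hadj
      rcases hadj with ⟨⟨h1 | h1, _⟩, h3⟩
      · exact h1
      · exact absurd h1 hp
    · intro h
      rw [EditedGraph, SimpleGraph.fromEdgeSet_adj]
      exact ⟨⟨Or.inl h, hm⟩, h.ne⟩
  by_cases hall : u ∈ U ∧ v ∈ U ∧ x ∈ U ∧ y ∈ U
  · obtain ⟨hu, hv, hx, hy⟩ := hall
    exact hind ⟨u, hu⟩ ⟨v, hv⟩ ⟨x, hx⟩ ⟨y, hy⟩
      ⟨fun h => huv (congrArg Subtype.val h), fun h => hux (congrArg Subtype.val h),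
       fun h => huy (congrArg Subtype.val h), fun h => hvx (congrArg Subtype.val h),
       fun h => hvy (congrArg Subtype.val h), fun h => hxy (congrArg Subtype.val h),
       auv, aux, auy, avx, avy, naxy⟩
  · -- helper: a vertex outside U with two H-neighbors in the diamond
    have out : ∀ w : V, w ∉ U →
        (∀ a b : V, (EditedGraph G Ep Em).Adj w a → (EditedGraph G Ep Em).Adj w b →
          a ∈ U → b ∈ U → a = b) := by
      intro w hw a b ha hb haU hbU
      exact hU w hw a haU b hbU ((key w a (Or.inl hw)).1 ha) ((key w b (Or.inl hw)).1 hb)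
    by_cases hu : u ∈ U
    · by_cases hv : v ∈ U
      · -- then x ∉ U or y ∉ U
        by_cases hx : x ∈ U
        · have hy : y ∉ U := fun hy => hall ⟨hu, hv, hx, hy⟩
          exact huv (out y hy u v auy.symm avy.symm hu hv)
        · exact huv (out x hx u v aux.symm avx.symm hu hv)
      · -- v ∉ U
        have gvu : G.Adj v u := (key v u (Or.inl hv)).1 auv.symm
        have gvx : G.Adj v x := (key v x (Or.inl hv)).1 avx
        have gvy : G.Adj v y := (key v y (Or.inl hv)).1 avy
        have nux : ¬ (u ∈ U ∧ x ∈ U) := fun ⟨h1, h2⟩ =>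
          hux (hU v hv u h1 x h2 gvu gvx)
        have nuy : ¬ (u ∈ U ∧ y ∈ U) := fun ⟨h1, h2⟩ =>
          huy (hU v hv u h1 y h2 gvu gvy)
        have nxy : ¬ (x ∈ U ∧ y ∈ U) := fun ⟨h1, h2⟩ =>
          hxy (hU v hv x h1 y h2 gvx gvy)
        exact hG u v x y ⟨huv, hux, huy, hvx, hvy, hxy, gvu.symm,
          (key u x (not_and_or.1 nux)).1 aux, (key u y (not_and_or.1 nuy)).1 auy,
          gvx, gvy, fun h => naxy ((key x y (not_and_or.1 nxy)).2 h)⟩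
    · -- u ∉ U
      have guv : G.Adj u v := (key u v (Or.inl hu)).1 auv
      have gux : G.Adj u x := (key u x (Or.inl hu)).1 aux
      have guy : G.Adj u y := (key u y (Or.inl hu)).1 auy
      have nvx : ¬ (v ∈ U ∧ x ∈ U) := fun ⟨h1, h2⟩ =>
        hvx (hU u hu v h1 x h2 guv gux)
      have nvy : ¬ (v ∈ U ∧ y ∈ U) := fun ⟨h1, h2⟩ =>
        hvy (hU u hu v h1 y h2 guv guy)
      have nxy : ¬ (x ∈ U ∧ y ∈ U) := fun ⟨h1, h2⟩ =>
        hxy (hU u hu x h1 y h2 gux guy)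
      exact hG u v x y ⟨huv, hux, huy, hvx, hvy, hxy, guv, gux, guy,
        (key v x (not_and_or.1 nvx)).1 avx, (key v y (not_and_or.1 nvy)).1 avy,
        fun h => naxy ((key x y (not_and_or.1 nxy)).2 h)⟩
end

section
/- Let (E+, E−) be a minimum solution to a reduced yes-instance (G, k) of the diamond-free editing problem. Then every vertex that is an endpoint of some edge in E+ is contained in some small type-I maximal clique of G. -/
variable {V : Type*}

namespace DF7

variable {V : Type*}

lemma edited_adj (G : SimpleGraph V) (Ep Em : Finset (Sym2 V)) (x y : V) :
    (EditedGraph G Ep Em).Adj x y ↔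
      (G.Adj x y ∨ s(x,y) ∈ Ep) ∧ s(x,y) ∉ Em ∧ x ≠ y := by
  show (SimpleGraph.fromEdgeSet _).Adj x y ↔ _
  rw [SimpleGraph.fromEdgeSet_adj]
  simp only [Set.mem_diff, Set.mem_union, SimpleGraph.mem_edgeSet, Finset.mem_coe]
  tauto

lemma isClique_triple [DecidableEq V] {G : SimpleGraph V} {a b c : V}
    (hab : G.Adj a b) (hac : G.Adj a c) (hbc : G.Adj b c) :
    G.IsClique (↑({a, b, c} : Finset V) : Set V) := by
  intro x hx y hy hxy
  simp only [Finset.coe_insert, Set.mem_insert_iff, Finset.coe_singleton,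
    Set.mem_singleton_iff] at hx hy
  rcases hx with rfl | rfl | rfl <;> rcases hy with rfl | rfl | rfl <;>
    first
      | exact absurd rfl hxy
      | assumption
      | exact hab.symm
      | exact hac.symm
      | exact hbc.symm

lemma exists_maxclique [Fintype V] [DecidableEq V] (G : SimpleGraph V)
    (s : Finset V) (hs : G.IsClique (↑s : Set V)) :
    ∃ K : Finset V, IsMaxClique G K ∧ s ⊆ K := by
  classical
  have hS : s ∈ Finset.univ.filter
      (fun K : Finset V => G.IsClique (↑K : Set V) ∧ s ⊆ K) := by
    simp [hs]
  obtain ⟨K, hK, hmax⟩ := Finset.exists_max_image _ (fun K : Finset V => K.card)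
    ⟨s, hS⟩
  simp only [Finset.mem_filter, Finset.mem_univ, true_and] at hK
  refine ⟨K, ⟨hK.1, ?_⟩, hK.2⟩
  intro K' hK' hsub
  refine Finset.eq_of_subset_of_card_le hsub ?_
  have : K' ∈ Finset.univ.filter
      (fun K : Finset V => G.IsClique (↑K : Set V) ∧ s ⊆ K) := by
    simp [hK', hK.2.trans hsub]
  exact hmax K' this

lemma witness_of_clique (G : SimpleGraph V) (k : ℕ) (r s : V) (B : Finset V)
    (hcard : 2 * k + 2 ≤ B.card)
    (h1 : ∀ w ∈ B, G.Adj r w ∧ G.Adj s w)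
    (h2 : ∀ w ∈ B, ∀ w' ∈ B, w ≠ w' → G.Adj w w') :
    EdgePairedWitness G k r s := by
  classical
  obtain ⟨B', hB'sub, hB'card⟩ := Finset.exists_subset_card_eq hcard
  set F : Fin (2 * k + 2) → V :=
    fun i => (B'.equivFin.symm (Fin.cast hB'card.symm i) : V) with hF
  have hFmem : ∀ i, F i ∈ B := fun i => hB'sub (B'.equivFin.symm _).2
  have hFinj : Function.Injective F := by
    intro i j hij
    have h1 : B'.equivFin.symm (Fin.cast hB'card.symm i)
        = B'.equivFin.symm (Fin.cast hB'card.symm j) := Subtype.coe_injective hij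
    have h2 := B'.equivFin.symm.injective h1
    have h3 : (i : ℕ) = (j : ℕ) := by simpa using congrArg Fin.val h2
    exact Fin.ext h3
  refine ⟨fun i => F ⟨2 * i.1, by have := i.isLt; omega⟩,
          fun i => F ⟨2 * i.1 + 1, by have := i.isLt; omega⟩, ?_, ?_, ?_⟩
  · intro a b hab
    rcases a with a | a <;> rcases b with b | b <;>
      simp only [Sum.elim_inl, Sum.elim_inr] at hab <;>
      have hv := congrArg Fin.val (hFinj hab)
    · simp only at hv; exact congrArg Sum.inl (Fin.ext (by omega))
    · simp only at hv; omega
    · simp only at hv; omega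
    · simp only at hv; exact congrArg Sum.inr (Fin.ext (by omega))
  · intro i
    exact ⟨(h1 _ (hFmem _)).1, (h1 _ (hFmem _)).2, (h1 _ (hFmem _)).1,
      (h1 _ (hFmem _)).2⟩
  · intro i
    refine h2 _ (hFmem _) _ (hFmem _) ?_
    intro hxy
    have := congrArg Fin.val (hFinj hxy)
    simp only at this; omega

end DF7
namespace DF7

variable {V : Type*}

lemma sym2_forall_mem {x y : V} {Q : Finset V} :
    (∀ w ∈ s(x,y), w ∈ Q) ↔ (x ∈ Q ∧ y ∈ Q) := by
  constructor
  · intro h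
    exact ⟨h x (by simp), h y (by simp)⟩
  · rintro ⟨h1, h2⟩ w hw
    rcases Sym2.mem_iff.1 hw with rfl | rfl <;> assumption

lemma exchange [Fintype V] [DecidableEq V] (G : SimpleGraph V) (k : ℕ)
    (Ep Em : Finset (Sym2 V)) (hmin : IsMinSolution G k Ep Em)
    (Q : Finset V)
    (hQcl : ∀ a ∈ Q, ∀ b ∈ Q, a ≠ b → (EditedGraph G Ep Em).Adj a b)
    (hQmax : ∀ w ∉ Q, ∃ q ∈ Q, q ≠ w ∧ ¬ (EditedGraph G Ep Em).Adj q w)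
    (R : SimpleGraph V)
    (hRQ : ∀ a b, R.Adj a b → a ∈ Q ∧ b ∈ Q)
    (hRdf : DiamondFree R)
    (Adel Odel : Finset (Sym2 V))
    (hA : ∀ p, p ∈ Adel ↔ (p ∈ Ep ∧ (∀ w ∈ p, w ∈ Q) ∧ p ∉ R.edgeSet))
    (hO : ∀ p, p ∈ Odel ↔ (p ∈ G.edgeSet ∧ (∀ w ∈ p, w ∈ Q) ∧ p ∉ R.edgeSet)) :
    Adel.card ≤ Odel.card := by
  classical
  set G' := EditedGraph G Ep Em with hG'
  have hEp : ∀ e ∈ Ep, e ∉ G.edgeSet ∧ ¬ e.IsDiag := hmin.1.1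
  have hEm : ∀ e ∈ Em, e ∈ G.edgeSet := hmin.1.2.1
  have hdf : DiamondFree G' := hmin.1.2.2.2
  set Epx := Ep \ Adel with hEpxdef
  set Emx := Em ∪ Odel with hEmxdef
  have hAdelsub : Adel ⊆ Ep := fun p hp => ((hA p).1 hp).1
  have hQpair_adj : ∀ x y : V, x ∈ Q → y ∈ Q → x ≠ y → G'.Adj x y := by
    intro x y hx hy hne; exact hQcl x hx y hy hne
  have hG'notEm : ∀ x y : V, G'.Adj x y → s(x,y) ∉ Em := by
    intro x y h
    exact ((edited_adj G Ep Em x y).1 h).2.1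
  have hOdel_elim : ∀ (x y : V), s(x,y) ∈ Odel →
      (G.Adj x y ∧ x ∈ Q ∧ y ∈ Q ∧ ¬ R.Adj x y) := by
    intro x y hp
    obtain ⟨h1, h2, h3⟩ := (hO _).1 hp
    have hadj : G.Adj x y := (SimpleGraph.mem_edgeSet G).1 h1
    obtain ⟨hxQ, hyQ⟩ := sym2_forall_mem.1 h2
    exact ⟨hadj, hxQ, hyQ, fun hr => h3 ((SimpleGraph.mem_edgeSet R).2 hr)⟩
  have hOdisj : Disjoint Em Odel := by
    rw [Finset.disjoint_right]
    intro p hp hpm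
    induction p using Sym2.ind with
    | _ x y =>
      obtain ⟨hadj, hxQ, hyQ, _⟩ := hOdel_elim x y hp
      exact hG'notEm x y (hQpair_adj x y hxQ hyQ hadj.ne) hpm
  have hHadj : ∀ x y : V, (EditedGraph G Epx Emx).Adj x y ↔
      (G'.Adj x y ∧ ((x ∈ Q ∧ y ∈ Q) → R.Adj x y)) := by
    intro x y
    rw [edited_adj, hG', edited_adj]
    constructor
    · rintro ⟨h1, h2, hne⟩
      rw [hEmxdef, Finset.mem_union] at h2
      push_neg at h2
      obtain ⟨h2m, h2o⟩ := h2
      have h2o' : s(x,y) ∈ G.edgeSet → (x ∈ Q ∧ y ∈ Q) → R.Adj x y := by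
        intro hGe hq
        by_contra hr
        exact h2o ((hO _).2 ⟨hGe, sym2_forall_mem.2 hq,
          fun hm => hr ((SimpleGraph.mem_edgeSet R).1 hm)⟩)
      rcases h1 with hadj | hpe
      · exact ⟨⟨Or.inl hadj, h2m, hne⟩,
          h2o' ((SimpleGraph.mem_edgeSet G).2 hadj)⟩
      · rw [hEpxdef, Finset.mem_sdiff] at hpe
        obtain ⟨hpe, hpa⟩ := hpe
        have hRadj : (x ∈ Q ∧ y ∈ Q) → R.Adj x y := by
          intro hq
          by_contra hr
          exact hpa ((hA _).2 ⟨hpe, sym2_forall_mem.2 hq,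
            fun hm => hr ((SimpleGraph.mem_edgeSet R).1 hm)⟩)
        exact ⟨⟨Or.inr hpe, h2m, hne⟩, hRadj⟩
    · rintro ⟨⟨h1, h2m, hne⟩, hR⟩
      refine ⟨?_, ?_, hne⟩
      · rcases h1 with hadj | hpe
        · exact Or.inl hadj
        · refine Or.inr ?_
          rw [hEpxdef, Finset.mem_sdiff]
          refine ⟨hpe, fun hmem => ?_⟩
          obtain ⟨-, hq, hnr⟩ := (hA _).1 hmem
          exact hnr ((SimpleGraph.mem_edgeSet R).2 (hR (sym2_forall_mem.1 hq)))
      · rw [hEmxdef, Finset.mem_union]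
        push_neg
        refine ⟨h2m, fun hmem => ?_⟩
        obtain ⟨-, hq, hnr⟩ := (hO _).1 hmem
        exact hnr ((SimpleGraph.mem_edgeSet R).2 (hR (sym2_forall_mem.1 hq)))
  have hHdf : DiamondFree (EditedGraph G Epx Emx) := by
    intro a b x y hd
    obtain ⟨hab, hax, hay, hbx, hby, hxy, e1, e2, e3, e4, e5, e6⟩ := hd
    have g1 := ((hHadj a b).1 e1).1
    have g2 := ((hHadj a x).1 e2).1
    have g3 := ((hHadj a y).1 e3).1
    have g4 := ((hHadj b x).1 e4).1
    have g5 := ((hHadj b y).1 e5).1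
    by_cases hxyG : G'.Adj x y
    · have hxQ_and : x ∈ Q ∧ y ∈ Q ∧ ¬ R.Adj x y := by
        by_contra hcon
        push_neg at hcon
        refine e6 ((hHadj x y).2 ⟨hxyG, fun hq => ?_⟩)
        exact hcon hq.1 hq.2
      obtain ⟨hxQ, hyQ, hnR⟩ := hxQ_and
      have memQ : ∀ c : V, G'.Adj c x → G'.Adj c y → c ∈ Q := by
        intro c hcx hcy
        by_contra hc
        obtain ⟨q, hqQ, hqc, hqnadj⟩ := hQmax c hc
        have hqx : q ≠ x := by rintro rfl; exact hqnadj hcx.symm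
        have hqy : q ≠ y := by rintro rfl; exact hqnadj hcy.symm
        have hcq : c ≠ q := fun h => hc (h ▸ hqQ)
        refine hdf x y c q ⟨hxy, hcx.ne', hqx.symm, hcy.ne', hqy.symm, hcq,
          hxyG, hcx.symm, (hQpair_adj q x hqQ hxQ hqx).symm, hcy.symm,
          (hQpair_adj q y hqQ hyQ hqy).symm, fun h => hqnadj h.symm⟩
      have haQ : a ∈ Q := memQ a g2 g3
      have hbQ : b ∈ Q := memQ b g4 g5
      have r1 : R.Adj a b := ((hHadj a b).1 e1).2 ⟨haQ, hbQ⟩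
      have r2 : R.Adj a x := ((hHadj a x).1 e2).2 ⟨haQ, hxQ⟩
      have r3 : R.Adj a y := ((hHadj a y).1 e3).2 ⟨haQ, hyQ⟩
      have r4 : R.Adj b x := ((hHadj b x).1 e4).2 ⟨hbQ, hxQ⟩
      have r5 : R.Adj b y := ((hHadj b y).1 e5).2 ⟨hbQ, hyQ⟩
      exact hRdf a b x y ⟨hab, hax, hay, hbx, hby, hxy, r1, r2, r3, r4, r5, hnR⟩
    · exact hdf a b x y ⟨hab, hax, hay, hbx, hby, hxy,
        g1, g2, g3, g4, g5, hxyG⟩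
  have hEpx : ∀ e ∈ Epx, e ∉ G.edgeSet ∧ ¬ e.IsDiag :=
    fun e he => hEp e (Finset.mem_sdiff.1 he).1
  have hEmx : ∀ e ∈ Emx, e ∈ G.edgeSet := by
    intro e he
    rcases Finset.mem_union.1 he with h | h
    · exact hEm e h
    · exact ((hO e).1 h).1
  have hle := hmin.2 Epx Emx hEpx hEmx hHdf
  have hc1 : Epx.card = Ep.card - Adel.card := Finset.card_sdiff_of_subset hAdelsub
  have hc2 : Emx.card = Em.card + Odel.card := Finset.card_union_of_disjoint hOdisj
  have hc3 : Adel.card ≤ Ep.card := Finset.card_le_card hAdelsub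
  omega

end DF7
namespace DF7

variable {V : Type*}

lemma card_lt_of_injOn_miss {α : Type*} [DecidableEq α] (Od Ad : Finset α)
    (f : α → α) (m : α)
    (hmaps : ∀ p ∈ Od, f p ∈ Ad) (hinj : Set.InjOn f ↑Od) (hm : m ∈ Ad)
    (hmiss : ∀ p ∈ Od, f p ≠ m) : Od.card < Ad.card := by
  classical
  have hsub : insert m (Od.image f) ⊆ Ad := by
    intro x hx
    rcases Finset.mem_insert.1 hx with rfl | hx
    · exact hm
    · obtain ⟨p, hp, rfl⟩ := Finset.mem_image.1 hx
      exact hmaps p hp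
  have hnotm : m ∉ Od.image f := by
    rw [Finset.mem_image]
    rintro ⟨p, hp, hfp⟩
    exact hmiss p hp hfp
  calc Od.card = (Od.image f).card := (Finset.card_image_of_injOn hinj).symm
    _ < (insert m (Od.image f)).card := by
        rw [Finset.card_insert_of_notMem hnotm]; omega
    _ ≤ Ad.card := Finset.card_le_card hsub

lemma package [Fintype V] [DecidableEq V] (G : SimpleGraph V) (k : ℕ)
    (Ep Em : Finset (Sym2 V)) (hmin : IsMinSolution G k Ep Em)
    (u v : V) (huv : s(u,v) ∈ Ep) :
    ∃ r c₁ c₂ sv : V,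
      (u = r ∨ u = c₁) ∧
      s(r, sv) ∈ Ep ∧
      G.Adj r c₁ ∧ G.Adj r c₂ ∧ G.Adj c₁ c₂ ∧
      G.Adj sv c₁ ∧ G.Adj sv c₂ ∧
      ¬ G.Adj r sv ∧ r ≠ sv ∧
      (EditedGraph G Ep Em).Adj r c₁ ∧ (EditedGraph G Ep Em).Adj c₁ sv := by
  classical
  set G' := EditedGraph G Ep Em with hG'
  have hEp : ∀ e ∈ Ep, e ∉ G.edgeSet ∧ ¬ e.IsDiag := hmin.1.1
  have hEm : ∀ e ∈ Em, e ∈ G.edgeSet := hmin.1.2.1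
  have hdf : DiamondFree G' := hmin.1.2.2.2
  have hne : u ≠ v := fun h => (hEp _ huv).2 (Sym2.mk_isDiag_iff.2 h)
  have hnadj : ¬ G.Adj u v :=
    fun h => (hEp _ huv).1 ((SimpleGraph.mem_edgeSet G).2 h)
  have huvEm : s(u,v) ∉ Em := fun h => (hEp _ huv).1 (hEm _ h)
  have hG'uv : G'.Adj u v := by
    rw [hG', edited_adj]; exact ⟨Or.inr huv, huvEm, hne⟩
  set Q : Finset V := Finset.univ.filter
    (fun w => w = u ∨ w = v ∨ (G'.Adj u w ∧ G'.Adj v w)) with hQdef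
  have hQmem : ∀ w : V, w ∈ Q ↔
      (w = u ∨ w = v ∨ (G'.Adj u w ∧ G'.Adj v w)) := by
    intro w; rw [hQdef]; simp
  have huQ : u ∈ Q := (hQmem u).2 (Or.inl rfl)
  have hvQ : v ∈ Q := (hQmem v).2 (Or.inr (Or.inl rfl))
  have hQcl : ∀ a ∈ Q, ∀ b ∈ Q, a ≠ b → G'.Adj a b := by
    intro a ha b hb hab
    rw [hQmem] at ha hb
    rcases ha with rfl | rfl | ⟨hau, hav⟩ <;>
      rcases hb with rfl | rfl | hb
    · exact absurd rfl hab
    · exact hG'uv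
    · exact hb.1
    · exact hG'uv.symm
    · exact absurd rfl hab
    · exact hb.2
    · exact hau.symm
    · exact hav.symm
    · obtain ⟨hbu, hbv⟩ := hb
      by_contra hnab
      exact hdf u v a b ⟨hne, hau.ne, hbu.ne, hav.ne, hbv.ne, hab,
        hG'uv, hau, hbu, hav, hbv, hnab⟩
  have hQmax : ∀ w ∉ Q, ∃ q ∈ Q, q ≠ w ∧ ¬ G'.Adj q w := by
    intro w hw
    rw [hQmem] at hw
    push_neg at hw
    obtain ⟨hwu, hwv, hwd⟩ := hw
    by_cases h : G'.Adj u w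
    · exact ⟨v, hvQ, fun he => hwv he.symm, hwd h⟩
    · exact ⟨u, huQ, fun he => hwu he.symm, h⟩
  have hApair : ∀ x y : V, x ∈ Q → y ∈ Q → x ≠ y → ¬ G.Adj x y →
      s(x,y) ∈ Ep := by
    intro x y hx hy hxy hnxy
    have h := hQcl x hx y hy hxy
    rw [hG', edited_adj] at h
    rcases h.1 with h' | h'
    · exact absurd h' hnxy
    · exact h'
  by_contra hno
  -- no G-diamond inside Q contains u
  have hnoQdiam : ∀ a b x y : V, a ∈ Q → b ∈ Q → x ∈ Q → y ∈ Q →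
      IsDiamond G a b x y → (u = a ∨ u = b ∨ u = x ∨ u = y) → False := by
    intro a b x y ha hb hx hy hd hu
    obtain ⟨nab, nax, nay, nbx, nby, nxy, adjab, adjax, adjay, adjbx, adjby,
      nadjxy⟩ := hd
    have hxyEp : s(x,y) ∈ Ep := hApair x y hx hy nxy nadjxy
    have hyxEp : s(y,x) ∈ Ep := by rwa [Sym2.eq_swap]
    rcases hu with rfl | rfl | rfl | rfl
    · exact hno ⟨x, u, b, y, Or.inr rfl, hxyEp, adjax.symm, adjbx.symm, adjab,
        adjay.symm, adjby.symm, nadjxy, nxy,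
        hQcl x hx u ha nax.symm, hQcl u ha y hy nay⟩
    · exact hno ⟨x, u, a, y, Or.inr rfl, hxyEp, adjbx.symm, adjax.symm,
        adjab.symm, adjby.symm, adjay.symm, nadjxy, nxy,
        hQcl x hx u hb nbx.symm, hQcl u hb y hy nby⟩
    · exact hno ⟨u, a, b, y, Or.inl rfl, hxyEp, adjax.symm, adjbx.symm, adjab,
        adjay.symm, adjby.symm, nadjxy, nxy,
        hQcl u hx a ha (fun h => nax h.symm), hQcl a ha y hy nay⟩
    · exact hno ⟨u, a, b, x, Or.inl rfl, hyxEp, adjay.symm, adjby.symm, adjab,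
        adjax.symm, adjbx.symm, (fun h => nadjxy h.symm), nxy.symm,
        hQcl u hy a ha (fun h => nay h.symm), hQcl a ha x hx nax⟩
  set W : Finset V := Q.filter (fun w => G.Adj u w) with hWdef
  set Z : Finset V := Q.filter (fun w => w ≠ u ∧ ¬ G.Adj u w) with hZdef
  have hWmem : ∀ w : V, w ∈ W ↔ (w ∈ Q ∧ G.Adj u w) := by
    intro w; rw [hWdef]; simp
  have hZmem : ∀ w : V, w ∈ Z ↔ (w ∈ Q ∧ w ≠ u ∧ ¬ G.Adj u w) := by
    intro w; rw [hZdef]; simp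
  have huW : u ∉ W := fun h => G.irrefl ((hWmem u).1 h).2
  have huZ : u ∉ Z := fun h => ((hZmem u).1 h).2.1 rfl
  have hvZ : v ∈ Z := (hZmem v).2 ⟨hvQ, hne.symm, hnadj⟩
  have hWZ : ∀ w, w ∈ W → w ∉ Z := by
    intro w hw hz
    exact ((hZmem w).1 hz).2.2 ((hWmem w).1 hw).2
  have hsplit : ∀ w ∈ Q, w = u ∨ w ∈ W ∨ w ∈ Z := by
    intro w hw
    by_cases h1 : w = u
    · exact Or.inl h1
    by_cases h2 : G.Adj u w
    · exact Or.inr (Or.inl ((hWmem w).2 ⟨hw, h2⟩))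
    · exact Or.inr (Or.inr ((hZmem w).2 ⟨hw, h1, h2⟩))
  -- gamma: neighborhoods within W are cliques
  have hgamma : ∀ w ∈ W, ∀ p ∈ W, ∀ q ∈ W, p ≠ q → G.Adj w p → G.Adj w q →
      G.Adj p q := by
    intro w hw p hp q hq hpq hwp hwq
    by_contra hnpq
    have hwW := (hWmem w).1 hw
    have hpW := (hWmem p).1 hp
    have hqW := (hWmem q).1 hq
    exact hnoQdiam u w p q huQ hwW.1 hpW.1 hqW.1
      ⟨hwW.2.ne, hpW.2.ne, hqW.2.ne, hwp.ne, hwq.ne, hpq,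
        hwW.2, hpW.2, hqW.2, hwp, hwq, hnpq⟩ (Or.inl rfl)
  -- alpha: Z-vertices have independent neighborhoods in W
  have halpha : ∀ z ∈ Z, ∀ p ∈ W, ∀ q ∈ W, p ≠ q → G.Adj z p → G.Adj z q →
      ¬ G.Adj p q := by
    intro z hz p hp q hq hpq hzp hzq hadj
    have hzZ := (hZmem z).1 hz
    have hpW := (hWmem p).1 hp
    have hqW := (hWmem q).1 hq
    exact hnoQdiam p q u z hpW.1 hqW.1 huQ hzZ.1
      ⟨hpq, hpW.2.ne', hzp.ne', hqW.2.ne', hzq.ne', (fun h => hzZ.2.1 h.symm),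
        hadj, hpW.2.symm, hzp.symm, hqW.2.symm, hzq.symm, hzZ.2.2⟩
      (Or.inr (Or.inr (Or.inl rfl)))
  by_cases hWedge : ∃ p ∈ W, ∃ q ∈ W, G.Adj p q
  · -- Branch A : W contains a G-edge
    obtain ⟨p₀, hp₀W, q₀, hq₀W, hpq₀⟩ := hWedge
    have hWQ : W ⊆ Q := fun w hw => ((hWmem w).1 hw).1
    have hZQ : Z ⊆ Q := fun w hw => ((hZmem w).1 hw).1
    set C : Finset V := W.filter (fun w => w = p₀ ∨ G.Adj p₀ w) with hCdef
    have hCmem : ∀ w : V, w ∈ C ↔ (w ∈ W ∧ (w = p₀ ∨ G.Adj p₀ w)) := by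
      intro w; rw [hCdef]; simp
    have hp₀C : p₀ ∈ C := (hCmem p₀).2 ⟨hp₀W, Or.inl rfl⟩
    have hq₀C : q₀ ∈ C := (hCmem q₀).2 ⟨hq₀W, Or.inr hpq₀⟩
    have hCW : C ⊆ W := fun w hw => ((hCmem w).1 hw).1
    have hCcl : ∀ a ∈ C, ∀ b ∈ C, a ≠ b → G.Adj a b := by
      intro a ha b hb hab
      obtain ⟨haW, ha'⟩ := (hCmem a).1 ha
      obtain ⟨hbW, hb'⟩ := (hCmem b).1 hb
      rcases ha' with rfl | ha' <;> rcases hb' with rfl | hb'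
      · exact absurd rfl hab
      · exact hb'
      · exact ha'.symm
      · exact hgamma p₀ hp₀W a haW b hbW hab ha' hb'
    have hCclosed : ∀ a ∈ C, ∀ x ∈ W, x ∉ C → ¬ G.Adj a x := by
      intro a ha x hx hxC hadj
      obtain ⟨haW, ha'⟩ := (hCmem a).1 ha
      rcases ha' with rfl | ha'
      · exact hxC ((hCmem x).2 ⟨hx, Or.inr hadj⟩)
      · have hxp₀ : x ≠ p₀ := fun h => hxC (h ▸ hp₀C)
        have := hgamma a haW x hx p₀ hp₀W hxp₀ hadj ha'.symm
        exact hxC ((hCmem x).2 ⟨hx, Or.inr this.symm⟩)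
    set P₁ : Finset V := insert u C with hP₁def
    set P₂ : Finset V := Q \ P₁ with hP₂def
    have huP₁ : u ∈ P₁ := Finset.mem_insert_self u C
    have hCP₁ : C ⊆ P₁ := Finset.subset_insert u C
    have hP₁Q : P₁ ⊆ Q := by
      rw [hP₁def, Finset.insert_subset_iff]
      exact ⟨huQ, (hCW.trans hWQ)⟩
    have hP₂Q : P₂ ⊆ Q := Finset.sdiff_subset
    have hP₁nP₂ : ∀ a, a ∈ P₁ → a ∉ P₂ := by
      intro a ha hb; exact (Finset.mem_sdiff.1 hb).2 ha
    have hWC_P₂ : ∀ w ∈ W, w ∉ C → w ∈ P₂ := by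
      intro w hw hwc
      refine Finset.mem_sdiff.2 ⟨hWQ hw, ?_⟩
      intro h
      rcases Finset.mem_insert.1 h with rfl | h
      · exact huW hw
      · exact hwc h
    have hZP₂ : ∀ z ∈ Z, z ∈ P₂ := by
      intro z hz
      refine Finset.mem_sdiff.2 ⟨hZQ hz, ?_⟩
      intro h
      rcases Finset.mem_insert.1 h with rfl | h
      · exact huZ hz
      · exact hWZ z (hCW h) hz
    set R : SimpleGraph V := SimpleGraph.fromRel
      (fun a b => (a ∈ P₁ ∧ b ∈ P₁) ∨ (a ∈ P₂ ∧ b ∈ P₂)) with hRdef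
    have hRadj : ∀ a b : V, R.Adj a b ↔
        (a ≠ b ∧ ((a ∈ P₁ ∧ b ∈ P₁) ∨ (a ∈ P₂ ∧ b ∈ P₂))) := by
      intro a b
      rw [hRdef, SimpleGraph.fromRel_adj]
      constructor
      · rintro ⟨h1, h2 | h2⟩
        · exact ⟨h1, h2⟩
        · exact ⟨h1, h2.elim (fun h => Or.inl ⟨h.2, h.1⟩)
            (fun h => Or.inr ⟨h.2, h.1⟩)⟩
      · rintro ⟨h1, h2⟩
        exact ⟨h1, Or.inl h2⟩
    have hRQ : ∀ a b, R.Adj a b → a ∈ Q ∧ b ∈ Q := by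
      intro a b hab
      rcases ((hRadj a b).1 hab).2 with ⟨h1, h2⟩ | ⟨h1, h2⟩
      · exact ⟨hP₁Q h1, hP₁Q h2⟩
      · exact ⟨hP₂Q h1, hP₂Q h2⟩
    have hRdf : DiamondFree R := by
      intro a b x y hd
      obtain ⟨-, -, -, -, -, nxy, -, eax, eay, -, -, nexy⟩ := hd
      have hax := ((hRadj a x).1 eax).2
      have hay := ((hRadj a y).1 eay).2
      refine nexy ((hRadj x y).2 ⟨nxy, ?_⟩)
      rcases hax with ⟨ha, hx⟩ | ⟨ha, hx⟩ <;> rcases hay with ⟨ha', hy⟩ | ⟨ha', hy⟩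
      · exact Or.inl ⟨hx, hy⟩
      · exact absurd ha' (hP₁nP₂ a ha)
      · exact absurd ha (hP₁nP₂ a ha')
      · exact Or.inr ⟨hx, hy⟩
    set Adel : Finset (Sym2 V) := Finset.univ.filter
      (fun p => p ∈ Ep ∧ (∀ w ∈ p, w ∈ Q) ∧ p ∉ R.edgeSet) with hAdeldef
    set Odel : Finset (Sym2 V) := Finset.univ.filter
      (fun p => p ∈ G.edgeSet ∧ (∀ w ∈ p, w ∈ Q) ∧ p ∉ R.edgeSet) with hOdeldef
    have hAdel : ∀ p, p ∈ Adel ↔ (p ∈ Ep ∧ (∀ w ∈ p, w ∈ Q) ∧ p ∉ R.edgeSet) := by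
      intro p; rw [hAdeldef]; simp
    have hOdel : ∀ p, p ∈ Odel ↔
        (p ∈ G.edgeSet ∧ (∀ w ∈ p, w ∈ Q) ∧ p ∉ R.edgeSet) := by
      intro p; rw [hOdeldef]; simp
    have hle := exchange G k Ep Em hmin Q hQcl hQmax R hRQ hRdf Adel Odel hAdel hOdel
    have hAdel_intro : ∀ x y : V, x ∈ Q → y ∈ Q → x ≠ y → ¬ G.Adj x y →
        ¬ R.Adj x y → s(x,y) ∈ Adel := by
      intro x y h1 h2 h3 h4 h5
      refine (hAdel _).2 ⟨hApair x y h1 h2 h3 h4, sym2_forall_mem.2 ⟨h1, h2⟩, ?_⟩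
      exact fun h => h5 ((SimpleGraph.mem_edgeSet R).1 h)
    have hOdel_elim : ∀ x y : V, s(x,y) ∈ Odel →
        (G.Adj x y ∧ x ∈ Q ∧ y ∈ Q ∧ ¬ R.Adj x y) := by
      intro x y hp
      obtain ⟨h1, h2, h3⟩ := (hOdel _).1 hp
      obtain ⟨hxQ, hyQ⟩ := sym2_forall_mem.1 h2
      exact ⟨(SimpleGraph.mem_edgeSet G).1 h1, hxQ, hyQ,
        fun hr => h3 ((SimpleGraph.mem_edgeSet R).2 hr)⟩
    -- shape of deleted original edges
    have hOshape : ∀ x y : V, G.Adj x y → x ∈ Q → y ∈ Q → ¬ R.Adj x y →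
        ((x = u ∧ y ∈ W ∧ y ∉ C) ∨ (y = u ∧ x ∈ W ∧ x ∉ C) ∨
         (x ∈ C ∧ y ∈ Z ∧ G.Adj x y) ∨ (y ∈ C ∧ x ∈ Z ∧ G.Adj y x)) := by
      intro x y hadj hxQ hyQ hnR
      have hxy : x ≠ y := hadj.ne
      have hcross : ¬ ((x ∈ P₁ ∧ y ∈ P₁) ∨ (x ∈ P₂ ∧ y ∈ P₂)) :=
        fun h => hnR ((hRadj x y).2 ⟨hxy, h⟩)
      have hnc : ∀ a b : V, a ∈ C → G.Adj a b → b ∈ W → b ∈ C := by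
        intro a b ha hab hbW
        by_contra hbc
        exact hCclosed a ha b hbW hbc hab
      rcases hsplit x hxQ with rfl | hxW | hxZ <;>
        rcases hsplit y hyQ with rfl | hyW | hyZ
      · exact absurd rfl hxy
      · -- x = u, y ∈ W
        by_cases hyC : y ∈ C
        · exact absurd (Or.inl ⟨huP₁, hCP₁ hyC⟩) hcross
        · exact Or.inl ⟨rfl, hyW, hyC⟩
      · exact absurd hadj ((hZmem y).1 hyZ).2.2
      · -- y = u, x ∈ W
        by_cases hxC : x ∈ C
        · exact absurd (Or.inl ⟨hCP₁ hxC, huP₁⟩) hcross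
        · exact Or.inr (Or.inl ⟨rfl, hxW, hxC⟩)
      · -- x, y ∈ W
        exfalso
        by_cases hxC : x ∈ C
        · by_cases hyC : y ∈ C
          · exact hcross (Or.inl ⟨hCP₁ hxC, hCP₁ hyC⟩)
          · exact hCclosed x hxC y hyW hyC hadj
        · by_cases hyC : y ∈ C
          · exact hCclosed y hyC x hxW hxC hadj.symm
          · exact hcross (Or.inr ⟨hWC_P₂ x hxW hxC, hWC_P₂ y hyW hyC⟩)
      · -- x ∈ W, y ∈ Z
        by_cases hxC : x ∈ C
        · exact Or.inr (Or.inr (Or.inl ⟨hxC, hyZ, hadj⟩))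
        · exact absurd (Or.inr ⟨hWC_P₂ x hxW hxC, hZP₂ y hyZ⟩) hcross
      · exact absurd hadj.symm ((hZmem x).1 hxZ).2.2
      · -- x ∈ Z, y ∈ W
        by_cases hyC : y ∈ C
        · exact Or.inr (Or.inr (Or.inr ⟨hyC, hxZ, hadj.symm⟩))
        · exact absurd (Or.inr ⟨hZP₂ x hxZ, hWC_P₂ y hyW hyC⟩) hcross
      · exact absurd (Or.inr ⟨hZP₂ x hxZ, hZP₂ y hyZ⟩) hcross
    set F : Sym2 V → Sym2 V := fun p =>
      if u ∈ p then Sym2.map (Equiv.swap u p₀) p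
      else Sym2.map (fun a => if a ∈ C then u else a) p with hFdef
    have hF1 : ∀ w, w ∈ W → w ∉ C → F s(u,w) = s(p₀,w) := by
      intro w hwW hwC
      have hwu : w ≠ u := fun h => huW (h ▸ hwW)
      have hwp : w ≠ p₀ := fun h => hwC (h ▸ hp₀C)
      rw [hFdef]
      simp only [if_pos (Sym2.mem_mk_left u w)]
      rw [Sym2.map_pair_eq, Equiv.swap_apply_left,
        Equiv.swap_apply_of_ne_of_ne hwu hwp]
    have hF1' : ∀ w, w ∈ W → w ∉ C → F s(w,u) = s(p₀,w) := by
      intro w hwW hwC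
      rw [show s(w,u) = s(u,w) from Sym2.eq_swap]
      exact hF1 w hwW hwC
    have hF2 : ∀ c z, c ∈ C → z ∈ Z → F s(c,z) = s(u,z) := by
      intro c z hc hz
      have hup : u ∉ s(c,z) := by
        rw [Sym2.mem_iff]
        rintro (rfl | rfl)
        · exact huW (hCW hc)
        · exact huZ hz
      rw [hFdef]
      simp only [if_neg hup]
      rw [Sym2.map_pair_eq, if_pos hc, if_neg (fun h => hWZ z (hCW h) hz)]
    have hF2' : ∀ c z, c ∈ C → z ∈ Z → F s(z,c) = s(u,z) := by
      intro c z hc hz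
      rw [show s(z,c) = s(c,z) from Sym2.eq_swap]
      exact hF2 c z hc hz
    have hdesc : ∀ p ∈ Odel,
        (∃ w, w ∈ W ∧ w ∉ C ∧ p = s(u,w) ∧ F p = s(p₀,w)) ∨
        (∃ c z, c ∈ C ∧ z ∈ Z ∧ G.Adj c z ∧ p = s(c,z) ∧ F p = s(u,z)) := by
      intro p hp
      induction p using Sym2.ind with
      | _ x y =>
        obtain ⟨hadj, hxQ, hyQ, hnR⟩ := hOdel_elim x y hp
        rcases hOshape x y hadj hxQ hyQ hnR with
          ⟨hxu, hyW, hyC⟩ | ⟨hyu, hxW, hxC⟩ | ⟨hxC, hyZ, h⟩ | ⟨hyC, hxZ, h⟩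
        · exact Or.inl ⟨y, hyW, hyC, by rw [hxu],
            by rw [hxu]; exact hF1 y hyW hyC⟩
        · exact Or.inl ⟨x, hxW, hxC, by rw [hyu]; exact Sym2.eq_swap,
            by rw [hyu]; exact hF1' x hxW hxC⟩
        · exact Or.inr ⟨x, y, hxC, hyZ, h, rfl, hF2 x y hxC hyZ⟩
        · exact Or.inr ⟨y, x, hyC, hxZ, h, Sym2.eq_swap, hF2' y x hyC hxZ⟩
    have hmaps : ∀ p ∈ Odel, F p ∈ Adel := by
      intro p hp
      rcases hdesc p hp with ⟨w, hwW, hwC, -, hFp⟩ | ⟨c, z, hcC, hzZ, -, -, hFp⟩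
      · rw [hFp]
        refine hAdel_intro p₀ w (hWQ hp₀W) (hWQ hwW)
          (fun h => hwC (h ▸ hp₀C)) (hCclosed p₀ hp₀C w hwW hwC) ?_
        intro hr
        rcases ((hRadj _ _).1 hr).2 with ⟨-, h2⟩ | ⟨h1, -⟩
        · rcases Finset.mem_insert.1 h2 with h2 | h2
          · exact huW (h2 ▸ hwW)
          · exact hwC h2
        · exact hP₁nP₂ p₀ (hCP₁ hp₀C) h1
      · rw [hFp]
        refine hAdel_intro u z huQ (hZQ hzZ)
          (fun h => huZ (h ▸ hzZ)) ((hZmem z).1 hzZ).2.2 ?_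
        intro hr
        rcases ((hRadj _ _).1 hr).2 with ⟨-, h2⟩ | ⟨h1, -⟩
        · rcases Finset.mem_insert.1 h2 with h2 | h2
          · exact ((hZmem z).1 hzZ).2.1 h2
          · exact hWZ z (hCW h2) hzZ
        · exact hP₁nP₂ u huP₁ h1
    have hinj : Set.InjOn F ↑Odel := by
      intro p hp p' hp' hFeq
      have hp2 : p ∈ Odel := hp
      have hp2' : p' ∈ Odel := hp'
      rcases hdesc p hp2 with ⟨w, hwW, hwC, hpe, hFp⟩ |
        ⟨c, z, hcC, hzZ, hcz, hpe, hFp⟩ <;>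
        rcases hdesc p' hp2' with ⟨w', hwW', hwC', hpe', hFp'⟩ |
          ⟨c', z', hcC', hzZ', hcz', hpe', hFp'⟩
      · rw [hFp, hFp'] at hFeq
        rcases Sym2.eq_iff.1 hFeq with ⟨-, h2⟩ | ⟨h1, h2⟩
        · rw [hpe, hpe', h2]
        · exact absurd (h2.symm ▸ hp₀C) hwC
      · rw [hFp, hFp'] at hFeq
        rcases Sym2.eq_iff.1 hFeq with ⟨h1, -⟩ | ⟨-, h2⟩
        · exact absurd (h1 ▸ hp₀W) huW
        · exact absurd (h2 ▸ hwW) huW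
      · rw [hFp, hFp'] at hFeq
        rcases Sym2.eq_iff.1 hFeq with ⟨h1, -⟩ | ⟨h1, -⟩
        · exact absurd (h1.symm ▸ hp₀W) huW
        · exact absurd (h1.symm ▸ hwW') huW
      · rw [hFp, hFp'] at hFeq
        rcases Sym2.eq_iff.1 hFeq with ⟨-, h2⟩ | ⟨h1, -⟩
        · have hzz : z = z' := h2
          subst hzz
          have hcc : c = c' := by
            by_contra hcc
            exact halpha z hzZ c (hCW hcC) c' (hCW hcC') hcc
              hcz.symm hcz'.symm (hCcl c hcC c' hcC' hcc)
          rw [hpe, hpe', hcc]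
        · exact absurd (h1.symm ▸ hzZ') huZ
    have hextra : ∃ w', w' ∈ C ∧ ¬ G.Adj w' v := by
      by_cases h : G.Adj p₀ v
      · refine ⟨q₀, hq₀C, fun h' => ?_⟩
        exact halpha v hvZ p₀ hp₀W q₀ hq₀W hpq₀.ne h.symm h'.symm hpq₀
      · exact ⟨p₀, hp₀C, h⟩
    obtain ⟨w', hw'C, hw'nadj⟩ := hextra
    have hw'W : w' ∈ W := hCW hw'C
    have hw'v : w' ≠ v := fun h => hWZ w' hw'W (h ▸ hvZ)
    have hm : s(w', v) ∈ Adel := by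
      refine hAdel_intro w' v (hWQ hw'W) hvQ hw'v hw'nadj ?_
      intro hr
      rcases ((hRadj _ _).1 hr).2 with ⟨-, h2⟩ | ⟨h1, -⟩
      · rcases Finset.mem_insert.1 h2 with h2 | h2
        · exact hne h2.symm
        · exact hWZ v (hCW h2) hvZ
      · exact hP₁nP₂ w' (hCP₁ hw'C) h1
    have hmiss : ∀ p ∈ Odel, F p ≠ s(w', v) := by
      intro p hp hFm
      rcases hdesc p hp with ⟨w, hwW, hwC, -, hFp⟩ |
        ⟨c, z, hcC, hzZ, -, -, hFp⟩
      · rw [hFp] at hFm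
        rcases Sym2.eq_iff.1 hFm with ⟨-, h2⟩ | ⟨h1, -⟩
        · exact hWZ v (h2 ▸ hwW) hvZ
        · exact hWZ v (h1 ▸ hp₀W) hvZ
      · rw [hFp] at hFm
        rcases Sym2.eq_iff.1 hFm with ⟨h1, -⟩ | ⟨h1, -⟩
        · exact huW (h1.symm ▸ hw'W)
        · exact hne h1
    exact absurd hle (not_le.2
      (card_lt_of_injOn_miss Odel Adel F s(w',v) hmaps hinj hm hmiss))
  · -- Branch B : W has no G-edge
    push_neg at hWedge
    have hWQ : W ⊆ Q := fun w hw => ((hWmem w).1 hw).1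
    have hZQ : Z ⊆ Q := fun w hw => ((hZmem w).1 hw).1
    by_cases hWcard : W.card ≤ Z.card
    · -- Branch B1 : u nearly isolated
      rcases Finset.eq_empty_or_nonempty W with hW0 | ⟨w₀, hw₀W⟩
      · -- W empty
        set R : SimpleGraph V := SimpleGraph.fromRel
          (fun a b => a ∈ Q.erase u ∧ b ∈ Q.erase u) with hRdef
        have hRadj : ∀ a b : V, R.Adj a b ↔
            (a ≠ b ∧ a ∈ Q.erase u ∧ b ∈ Q.erase u) := by
          intro a b
          rw [hRdef, SimpleGraph.fromRel_adj]
          constructor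
          · rintro ⟨h1, ⟨h2, h3⟩ | ⟨h2, h3⟩⟩
            · exact ⟨h1, h2, h3⟩
            · exact ⟨h1, h3, h2⟩
          · rintro ⟨h1, h2, h3⟩
            exact ⟨h1, Or.inl ⟨h2, h3⟩⟩
        have hRQ : ∀ a b, R.Adj a b → a ∈ Q ∧ b ∈ Q := by
          intro a b hab
          obtain ⟨-, h2, h3⟩ := (hRadj a b).1 hab
          exact ⟨Finset.mem_of_mem_erase h2, Finset.mem_of_mem_erase h3⟩
        have hRdf : DiamondFree R := by
          intro a b x y hd
          obtain ⟨-, -, -, -, -, nxy, -, eax, eay, -, -, nexy⟩ := hd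
          exact nexy ((hRadj x y).2 ⟨nxy, ((hRadj a x).1 eax).2.2,
            ((hRadj a y).1 eay).2.2⟩)
        set Adel : Finset (Sym2 V) := Finset.univ.filter
          (fun p => p ∈ Ep ∧ (∀ w ∈ p, w ∈ Q) ∧ p ∉ R.edgeSet) with hAdeldef
        set Odel : Finset (Sym2 V) := Finset.univ.filter
          (fun p => p ∈ G.edgeSet ∧ (∀ w ∈ p, w ∈ Q) ∧ p ∉ R.edgeSet) with hOdeldef
        have hAdel : ∀ p, p ∈ Adel ↔
            (p ∈ Ep ∧ (∀ w ∈ p, w ∈ Q) ∧ p ∉ R.edgeSet) := by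
          intro p; rw [hAdeldef]; simp
        have hOdel : ∀ p, p ∈ Odel ↔
            (p ∈ G.edgeSet ∧ (∀ w ∈ p, w ∈ Q) ∧ p ∉ R.edgeSet) := by
          intro p; rw [hOdeldef]; simp
        have hle := exchange G k Ep Em hmin Q hQcl hQmax R hRQ hRdf Adel Odel
          hAdel hOdel
        have hOempty : Odel = ∅ := by
          rw [Finset.eq_empty_iff_forall_notMem]
          intro p hp
          induction p using Sym2.ind with
          | _ x y =>
            obtain ⟨h1, h2, h3⟩ := (hOdel _).1 hp
            have hadj : G.Adj x y := (SimpleGraph.mem_edgeSet G).1 h1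
            obtain ⟨hxQ, hyQ⟩ := sym2_forall_mem.1 h2
            have hnR : ¬ R.Adj x y := fun hr => h3 ((SimpleGraph.mem_edgeSet R).2 hr)
            by_cases hxu : x = u
            · have : y ∈ W := (hWmem y).2 ⟨hyQ, hxu ▸ hadj⟩
              rw [hW0] at this
              exact absurd this (Finset.notMem_empty y)
            by_cases hyu : y = u
            · have : x ∈ W := (hWmem x).2 ⟨hxQ, (hyu ▸ hadj).symm⟩
              rw [hW0] at this
              exact absurd this (Finset.notMem_empty x)
            exact hnR ((hRadj x y).2 ⟨hadj.ne, Finset.mem_erase.2 ⟨hxu, hxQ⟩,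
              Finset.mem_erase.2 ⟨hyu, hyQ⟩⟩)
        have hmA : s(u,v) ∈ Adel := by
          refine (hAdel _).2 ⟨huv, sym2_forall_mem.2 ⟨huQ, hvQ⟩, ?_⟩
          intro h
          have := ((hRadj u v).1 ((SimpleGraph.mem_edgeSet R).1 h)).2.1
          exact (Finset.mem_erase.1 this).1 rfl
        rw [hOempty] at hle
        simp only [Finset.card_empty, Nat.le_zero, Finset.card_eq_zero] at hle
        rw [hle] at hmA
        exact absurd hmA (Finset.notMem_empty _)
      · -- W nonempty, with pendant w₀
        obtain ⟨Z', hZ'sub, hZ'card⟩ := Finset.exists_subset_card_eq hWcard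
        have e := Finset.equivOfCardEq (hZ'card.symm : W.card = Z'.card)
        set f : V → V := fun a => if h : a ∈ W then (e ⟨a, h⟩ : V) else a with hfdef
        have hfZ : ∀ a ∈ W, f a ∈ Z := by
          intro a ha
          rw [hfdef]
          simp only [dif_pos ha]
          exact hZ'sub (e ⟨a, ha⟩).2
        have hfinj : ∀ a ∈ W, ∀ b ∈ W, f a = f b → a = b := by
          intro a ha b hb hab
          rw [hfdef] at hab
          simp only [dif_pos ha, dif_pos hb] at hab
          have := e.injective (Subtype.coe_injective hab)
          exact congrArg Subtype.val this
        set R : SimpleGraph V := SimpleGraph.fromRel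
          (fun a b => (a ∈ Q.erase u ∧ b ∈ Q.erase u) ∨ (a = u ∧ b = w₀)) with hRdef
        have hw₀u : w₀ ≠ u := fun h => huW (h ▸ hw₀W)
        have hRadj : ∀ a b : V, R.Adj a b ↔
            (a ≠ b ∧ ((a ∈ Q.erase u ∧ b ∈ Q.erase u) ∨ (a = u ∧ b = w₀) ∨
              (b = u ∧ a = w₀))) := by
          intro a b
          rw [hRdef, SimpleGraph.fromRel_adj]
          constructor
          · rintro ⟨h1, (⟨h2, h3⟩ | ⟨h2, h3⟩) | (⟨h2, h3⟩ | ⟨h2, h3⟩)⟩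
            · exact ⟨h1, Or.inl ⟨h2, h3⟩⟩
            · exact ⟨h1, Or.inr (Or.inl ⟨h2, h3⟩)⟩
            · exact ⟨h1, Or.inl ⟨h3, h2⟩⟩
            · exact ⟨h1, Or.inr (Or.inr ⟨h2, h3⟩)⟩
          · rintro ⟨h1, ⟨h2, h3⟩ | ⟨h2, h3⟩ | ⟨h2, h3⟩⟩
            · exact ⟨h1, Or.inl (Or.inl ⟨h2, h3⟩)⟩
            · exact ⟨h1, Or.inl (Or.inr ⟨h2, h3⟩)⟩
            · exact ⟨h1, Or.inr (Or.inr ⟨h2, h3⟩)⟩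
        have hRQ : ∀ a b, R.Adj a b → a ∈ Q ∧ b ∈ Q := by
          intro a b hab
          rcases ((hRadj a b).1 hab).2 with ⟨h2, h3⟩ | ⟨h2, h3⟩ | ⟨h2, h3⟩
          · exact ⟨Finset.mem_of_mem_erase h2, Finset.mem_of_mem_erase h3⟩
          · exact ⟨h2.symm ▸ huQ, h3.symm ▸ hWQ hw₀W⟩
          · exact ⟨h3.symm ▸ hWQ hw₀W, h2.symm ▸ huQ⟩
        have hpetal : ∀ t a b : V, a ≠ b → R.Adj a t → R.Adj b t →
            t ∈ Q.erase u := by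
          intro t a b hab hat hbt
          rcases ((hRadj a t).1 hat).2 with ⟨-, h3⟩ | ⟨-, h3⟩ | ⟨h2, h3⟩
          · exact h3
          · exact h3.symm ▸ Finset.mem_erase.2 ⟨hw₀u, hWQ hw₀W⟩
          · -- t = u, a = w₀
            rcases ((hRadj b t).1 hbt).2 with ⟨-, h3'⟩ | ⟨-, h3'⟩ | ⟨-, h3'⟩
            · exact h3'
            · exact h3'.symm ▸ Finset.mem_erase.2 ⟨hw₀u, hWQ hw₀W⟩
            · exact absurd (h3.trans h3'.symm) hab
        have hRdf : DiamondFree R := by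
          intro a b x y hd
          obtain ⟨nab, -, -, -, -, nxy, -, eax, eay, ebx, eby, nexy⟩ := hd
          exact nexy ((hRadj x y).2 ⟨nxy, Or.inl
            ⟨hpetal x a b nab eax ebx, hpetal y a b nab eay eby⟩⟩)
        set Adel : Finset (Sym2 V) := Finset.univ.filter
          (fun p => p ∈ Ep ∧ (∀ w ∈ p, w ∈ Q) ∧ p ∉ R.edgeSet) with hAdeldef
        set Odel : Finset (Sym2 V) := Finset.univ.filter
          (fun p => p ∈ G.edgeSet ∧ (∀ w ∈ p, w ∈ Q) ∧ p ∉ R.edgeSet) with hOdeldef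
        have hAdel : ∀ p, p ∈ Adel ↔
            (p ∈ Ep ∧ (∀ w ∈ p, w ∈ Q) ∧ p ∉ R.edgeSet) := by
          intro p; rw [hAdeldef]; simp
        have hOdel : ∀ p, p ∈ Odel ↔
            (p ∈ G.edgeSet ∧ (∀ w ∈ p, w ∈ Q) ∧ p ∉ R.edgeSet) := by
          intro p; rw [hOdeldef]; simp
        have hle := exchange G k Ep Em hmin Q hQcl hQmax R hRQ hRdf Adel Odel
          hAdel hOdel
        have hAdel_intro : ∀ x y : V, x ∈ Q → y ∈ Q → x ≠ y → ¬ G.Adj x y →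
            ¬ R.Adj x y → s(x,y) ∈ Adel := by
          intro x y h1 h2 h3 h4 h5
          refine (hAdel _).2 ⟨hApair x y h1 h2 h3 h4, sym2_forall_mem.2 ⟨h1, h2⟩, ?_⟩
          exact fun h => h5 ((SimpleGraph.mem_edgeSet R).1 h)
        have hOdesc : ∀ p ∈ Odel, ∃ w, w ∈ W ∧ w ≠ w₀ ∧ p = s(u,w) := by
          intro p hp
          induction p using Sym2.ind with
          | _ x y =>
            obtain ⟨h1, h2, h3⟩ := (hOdel _).1 hp
            have hadj : G.Adj x y := (SimpleGraph.mem_edgeSet G).1 h1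
            obtain ⟨hxQ, hyQ⟩ := sym2_forall_mem.1 h2
            have hnR : ¬ R.Adj x y := fun hr => h3 ((SimpleGraph.mem_edgeSet R).2 hr)
            by_cases hxu : x = u
            · have hyW : y ∈ W := (hWmem y).2 ⟨hyQ, hxu ▸ hadj⟩
              refine ⟨y, hyW, ?_, by rw [hxu]⟩
              rintro rfl
              exact hnR ((hRadj x y).2 ⟨hadj.ne, Or.inr (Or.inl ⟨hxu, rfl⟩)⟩)
            by_cases hyu : y = u
            · have hxW : x ∈ W := (hWmem x).2 ⟨hxQ, (hyu ▸ hadj).symm⟩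
              refine ⟨x, hxW, ?_, by rw [hyu]; exact Sym2.eq_swap⟩
              rintro rfl
              exact hnR ((hRadj x y).2 ⟨hadj.ne, Or.inr (Or.inr ⟨hyu, rfl⟩)⟩)
            exact absurd ((hRadj x y).2 ⟨hadj.ne, Or.inl
              ⟨Finset.mem_erase.2 ⟨hxu, hxQ⟩, Finset.mem_erase.2 ⟨hyu, hyQ⟩⟩⟩) hnR
        set F : Sym2 V → Sym2 V :=
          Sym2.map (fun a => if a ∈ W then f a else a) with hFdef
        have hFval : ∀ w ∈ W, F s(u,w) = s(u, f w) := by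
          intro w hw
          rw [hFdef, Sym2.map_pair_eq, if_neg huW, if_pos hw]
        have himg : ∀ w ∈ W, s(u, f w) ∈ Adel := by
          intro w hw
          have hfZ' := hfZ w hw
          have hzm := (hZmem (f w)).1 hfZ'
          refine hAdel_intro u (f w) huQ hzm.1 (fun h => hzm.2.1 h.symm)
            hzm.2.2 ?_
          intro hr
          rcases ((hRadj _ _).1 hr).2 with ⟨h2, -⟩ | ⟨-, h3⟩ | ⟨h2, -⟩
          · exact (Finset.mem_erase.1 h2).1 rfl
          · exact hWZ w₀ hw₀W (h3 ▸ hfZ')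
          · exact hzm.2.1 h2
        have hmaps : ∀ p ∈ Odel, F p ∈ Adel := by
          intro p hp
          obtain ⟨w, hwW, -, hpe⟩ := hOdesc p hp
          rw [hpe, hFval w hwW]
          exact himg w hwW
        have hinj : Set.InjOn F ↑Odel := by
          intro p hp p' hp' hFeq
          obtain ⟨w, hwW, -, hpe⟩ := hOdesc p hp
          obtain ⟨w', hwW', -, hpe'⟩ := hOdesc p' hp'
          rw [hpe, hpe'] at hFeq ⊢
          rw [hFval w hwW, hFval w' hwW'] at hFeq
          rcases Sym2.eq_iff.1 hFeq with ⟨-, h2⟩ | ⟨h1, -⟩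
          · rw [hfinj w hwW w' hwW' h2]
          · exact absurd (h1.symm ▸ hfZ w' hwW') huZ
        have hm : s(u, f w₀) ∈ Adel := himg w₀ hw₀W
        have hmiss : ∀ p ∈ Odel, F p ≠ s(u, f w₀) := by
          intro p hp hFm
          obtain ⟨w, hwW, hww₀, hpe⟩ := hOdesc p hp
          rw [hpe, hFval w hwW] at hFm
          rcases Sym2.eq_iff.1 hFm with ⟨-, h2⟩ | ⟨h1, -⟩
          · exact hww₀ (hfinj w hwW w₀ hw₀W h2)
          · exact huZ (h1.symm ▸ hfZ w₀ hw₀W)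
        exact absurd hle (not_le.2
          (card_lt_of_injOn_miss Odel Adel F s(u, f w₀) hmaps hinj hm hmiss))
    · -- Branch B2 : Z smaller than W
      have hZcard : Z.card ≤ W.card := le_of_lt (not_le.1 hWcard)
      obtain ⟨W', hW'sub, hW'card⟩ := Finset.exists_subset_card_eq hZcard
      have e := Finset.equivOfCardEq (hW'card.symm : Z.card = W'.card)
      set f : V → V := fun a => if h : a ∈ Z then (e ⟨a, h⟩ : V) else a with hfdef
      have hfW : ∀ a ∈ Z, f a ∈ W := by
        intro a ha
        rw [hfdef]
        simp only [dif_pos ha]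
        exact hW'sub (e ⟨a, ha⟩).2
      have hfinj : ∀ a ∈ Z, ∀ b ∈ Z, f a = f b → a = b := by
        intro a ha b hb hab
        rw [hfdef] at hab
        simp only [dif_pos ha, dif_pos hb] at hab
        have := e.injective (Subtype.coe_injective hab)
        exact congrArg Subtype.val this
      set R : SimpleGraph V := SimpleGraph.fromRel
        (fun a b => a ∈ Q ∧ b ∈ Q ∧ G.Adj a b ∧ ¬ (a ∈ Z ∧ b ∈ Z)) with hRdef
      have hRadj : ∀ a b : V, R.Adj a b ↔
          (a ≠ b ∧ a ∈ Q ∧ b ∈ Q ∧ G.Adj a b ∧ ¬ (a ∈ Z ∧ b ∈ Z)) := by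
        intro a b
        rw [hRdef, SimpleGraph.fromRel_adj]
        constructor
        · rintro ⟨h1, ⟨h2, h3, h4, h5⟩ | ⟨h2, h3, h4, h5⟩⟩
          · exact ⟨h1, h2, h3, h4, h5⟩
          · exact ⟨h1, h3, h2, h4.symm, fun hc => h5 ⟨hc.2, hc.1⟩⟩
        · rintro ⟨h1, h2, h3, h4, h5⟩
          exact ⟨h1, Or.inl ⟨h2, h3, h4, h5⟩⟩
      have hRQ : ∀ a b, R.Adj a b → a ∈ Q ∧ b ∈ Q := by
        intro a b hab
        obtain ⟨-, h2, h3, -⟩ := (hRadj a b).1 hab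
        exact ⟨h2, h3⟩
      have hcross : ∀ a b, R.Adj a b → (a ∈ W ↔ b ∉ W) := by
        intro a b hab
        obtain ⟨hne', haQ, hbQ, hadj, hnZZ⟩ := (hRadj a b).1 hab
        rcases hsplit a haQ with rfl | haW | haZ
        · have hbW : b ∈ W := (hWmem b).2 ⟨hbQ, hadj⟩
          exact iff_of_false huW (fun h => h hbW)
        · have hbnW : b ∉ W := by
            intro hbW
            exact hWedge a haW b hbW hadj
          exact iff_of_true haW hbnW
        · have hanW : a ∉ W := fun h => hWZ a h haZ
          rcases hsplit b hbQ with rfl | hbW | hbZ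
          · exact absurd hadj.symm ((hZmem a).1 haZ).2.2
          · exact iff_of_false hanW (fun h => h hbW)
          · exact absurd ⟨haZ, hbZ⟩ hnZZ
      have hRdf : DiamondFree R := by
        intro a b x y hd
        obtain ⟨-, -, -, -, -, -, eab, eax, -, ebx, -, -⟩ := hd
        have h1 := hcross a b eab
        have h2 := hcross a x eax
        have h3 := hcross b x ebx
        tauto
      set Adel : Finset (Sym2 V) := Finset.univ.filter
        (fun p => p ∈ Ep ∧ (∀ w ∈ p, w ∈ Q) ∧ p ∉ R.edgeSet) with hAdeldef
      set Odel : Finset (Sym2 V) := Finset.univ.filter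
        (fun p => p ∈ G.edgeSet ∧ (∀ w ∈ p, w ∈ Q) ∧ p ∉ R.edgeSet) with hOdeldef
      have hAdel : ∀ p, p ∈ Adel ↔
          (p ∈ Ep ∧ (∀ w ∈ p, w ∈ Q) ∧ p ∉ R.edgeSet) := by
        intro p; rw [hAdeldef]; simp
      have hOdel : ∀ p, p ∈ Odel ↔
          (p ∈ G.edgeSet ∧ (∀ w ∈ p, w ∈ Q) ∧ p ∉ R.edgeSet) := by
        intro p; rw [hOdeldef]; simp
      have hle := exchange G k Ep Em hmin Q hQcl hQmax R hRQ hRdf Adel Odel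
        hAdel hOdel
      have hAdel_intro : ∀ x y : V, x ∈ Q → y ∈ Q → x ≠ y → ¬ G.Adj x y →
          s(x,y) ∈ Adel := by
        intro x y h1 h2 h3 h4
        refine (hAdel _).2 ⟨hApair x y h1 h2 h3 h4, sym2_forall_mem.2 ⟨h1, h2⟩, ?_⟩
        intro h
        exact h4 ((hRadj x y).1 ((SimpleGraph.mem_edgeSet R).1 h)).2.2.2.1
      have hOdesc : ∀ p ∈ Odel, ∃ z z', z ∈ Z ∧ z' ∈ Z ∧ G.Adj z z' ∧
          p = s(z,z') := by
        intro p hp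
        induction p using Sym2.ind with
        | _ x y =>
          obtain ⟨h1, h2, h3⟩ := (hOdel _).1 hp
          have hadj : G.Adj x y := (SimpleGraph.mem_edgeSet G).1 h1
          obtain ⟨hxQ, hyQ⟩ := sym2_forall_mem.1 h2
          have hnR : ¬ R.Adj x y := fun hr => h3 ((SimpleGraph.mem_edgeSet R).2 hr)
          have hZZ : x ∈ Z ∧ y ∈ Z := by
            by_contra hc
            exact hnR ((hRadj x y).2 ⟨hadj.ne, hxQ, hyQ, hadj, hc⟩)
          exact ⟨x, y, hZZ.1, hZZ.2, hadj, rfl⟩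
      set F : Sym2 V → Sym2 V :=
        Sym2.map (fun a => if a ∈ Z then f a else a) with hFdef
      have hFval : ∀ z ∈ Z, ∀ z' ∈ Z, F s(z,z') = s(f z, f z') := by
        intro z hz z' hz'
        rw [hFdef, Sym2.map_pair_eq, if_pos hz, if_pos hz']
      have hmaps : ∀ p ∈ Odel, F p ∈ Adel := by
        intro p hp
        obtain ⟨z, z', hz, hz', hadj, hpe⟩ := hOdesc p hp
        rw [hpe, hFval z hz z' hz']
        refine hAdel_intro (f z) (f z') (hWQ (hfW z hz)) (hWQ (hfW z' hz'))
          (fun h => hadj.ne (hfinj z hz z' hz' h)) ?_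
        exact hWedge (f z) (hfW z hz) (f z') (hfW z' hz')
      have hinj : Set.InjOn F ↑Odel := by
        intro p hp p' hp' hFeq
        obtain ⟨z, z', hz, hz', hadj, hpe⟩ := hOdesc p hp
        obtain ⟨w, w', hw, hw', hadj', hpe'⟩ := hOdesc p' hp'
        rw [hpe, hFval z hz z' hz', hpe', hFval w hw w' hw'] at hFeq
        rw [hpe, hpe']
        rcases Sym2.eq_iff.1 hFeq with ⟨h1, h2⟩ | ⟨h1, h2⟩
        · rw [hfinj z hz w hw h1, hfinj z' hz' w' hw' h2]
        · rw [hfinj z hz w' hw' h1, hfinj z' hz' w hw h2]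
          exact Sym2.eq_swap
      have hm : s(u,v) ∈ Adel := hAdel_intro u v huQ hvQ hne hnadj
      have hmiss : ∀ p ∈ Odel, F p ≠ s(u,v) := by
        intro p hp hFm
        obtain ⟨z, z', hz, hz', hadj, hpe⟩ := hOdesc p hp
        rw [hpe, hFval z hz z' hz'] at hFm
        rcases Sym2.eq_iff.1 hFm with ⟨h1, -⟩ | ⟨-, h2⟩
        · exact huW (h1 ▸ hfW z hz)
        · exact huW (h2 ▸ hfW z' hz')
      exact absurd hle (not_le.2
        (card_lt_of_injOn_miss Odel Adel F s(u,v) hmaps hinj hm hmiss))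

end DF7
namespace DF7

variable {V : Type*}

lemma sym2_filter_card_le [Fintype V] [DecidableEq V] (p : Sym2 V) :
    (Finset.univ.filter (fun w => w ∈ p)).card ≤ 2 := by
  induction p using Sym2.ind with
  | _ a b =>
    have hsub : Finset.univ.filter (fun w => w ∈ s(a,b)) ⊆ {a, b} := by
      intro w hw
      have := (Finset.mem_filter.1 hw).2
      rw [Sym2.mem_iff] at this
      simpa using this
    calc (Finset.univ.filter (fun w => w ∈ s(a,b))).card ≤ ({a,b} : Finset V).card :=
          Finset.card_le_card hsub
      _ ≤ 2 := Finset.card_insert_le a {b} |>.trans (by simp)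

lemma sym2_eq_of_two_mem {p : Sym2 V} {w w' : V} (hw : w ∈ p) (hw' : w' ∈ p)
    (hne : w ≠ w') : p = s(w, w') := by
  induction p using Sym2.ind with
  | _ a b =>
    rw [Sym2.mem_iff] at hw hw'
    rcases hw with rfl | rfl <;> rcases hw' with rfl | rfl
    · exact absurd rfl hne
    · rfl
    · exact Sym2.eq_swap
    · exact absurd rfl hne

lemma main_endpoint [Fintype V] [DecidableEq V] (G : SimpleGraph V) (k : ℕ)
    (hred : Reduced G k) (Ep Em : Finset (Sym2 V))
    (hmin : IsMinSolution G k Ep Em) (u v : V) (huv : s(u,v) ∈ Ep) :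
    ∃ K : Finset V, SmallTypeI G k K ∧ u ∈ K := by
  classical
  obtain ⟨r, c₁, c₂, sv, hur, hrsEp, arc1, arc2, ac12, asc1, asc2, nrs, hrs,
    g'rc1, g'c1s⟩ := package G k Ep Em hmin u v huv
  set G' := EditedGraph G Ep Em with hG'def
  have hEp : ∀ e ∈ Ep, e ∉ G.edgeSet ∧ ¬ e.IsDiag := hmin.1.1
  have hEm : ∀ e ∈ Em, e ∈ G.edgeSet := hmin.1.2.1
  have hsolcard : Ep.card + Em.card ≤ k := hmin.1.2.2.1
  have hdf : DiamondFree G' := hmin.1.2.2.2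
  obtain ⟨K, hKmax, hKsub⟩ := exists_maxclique G {r, c₁, c₂}
    (isClique_triple arc1 arc2 ac12)
  have hrK : r ∈ K := hKsub (by simp)
  have hc₁K : c₁ ∈ K := hKsub (by simp)
  have hc₂K : c₂ ∈ K := hKsub (by simp)
  have huK : u ∈ K := by rcases hur with rfl | rfl <;> assumption
  have hKadj : ∀ a ∈ K, ∀ b ∈ K, a ≠ b → G.Adj a b := by
    intro a ha b hb hne'
    exact hKmax.1 (Finset.mem_coe.2 ha) (Finset.mem_coe.2 hb) hne'
  have hsvK : sv ∉ K := fun h => nrs (hKadj r hrK sv h hrs)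
  obtain ⟨K', hK'max, hK'sub⟩ := exists_maxclique G {c₁, c₂, sv}
    (isClique_triple ac12 asc1.symm asc2.symm)
  have hKne : K' ≠ K := by
    intro h
    exact hsvK (h ▸ hK'sub (by simp))
  have hcard2 : 2 ≤ (K ∩ K').card := by
    have hsub2 : ({c₁, c₂} : Finset V) ⊆ K ∩ K' := by
      intro w hw
      rcases Finset.mem_insert.1 hw with rfl | hw
      · exact Finset.mem_inter.2 ⟨hc₁K, hK'sub (by simp)⟩
      · rw [Finset.mem_singleton.1 hw]
        exact Finset.mem_inter.2 ⟨hc₂K, hK'sub (by simp)⟩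
    calc 2 = ({c₁, c₂} : Finset V).card := by
          rw [Finset.card_insert_of_notMem (by simp [ac12.ne]),
            Finset.card_singleton]
      _ ≤ (K ∩ K').card := Finset.card_le_card hsub2
  -- smallness of K
  have hsmall : K.card < 3 * k + 2 := by
    by_contra hbig
    push_neg at hbig
    set E2 : Finset (Sym2 V) := Ep ∪ Em with hE2def
    have hE2card : E2.card ≤ k :=
      le_trans (Finset.card_union_le Ep Em) hsolcard
    set tch : V → Prop := fun w => ∃ p ∈ E2, w ∈ p with htchdef
    -- crude bound on touched vertices of K
    have hTK2 : (K.filter tch).card ≤ 2 * k := by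
      have hsub : K.filter tch ⊆ E2.biUnion
          (fun p => Finset.univ.filter (fun w => w ∈ p)) := by
        intro w hw
        obtain ⟨p, hp, hwp⟩ := (Finset.mem_filter.1 hw).2
        exact Finset.mem_biUnion.2 ⟨p, hp, Finset.mem_filter.2 ⟨Finset.mem_univ _, hwp⟩⟩
      calc (K.filter tch).card ≤ _ := Finset.card_le_card hsub
        _ ≤ ∑ p ∈ E2, (Finset.univ.filter (fun w => w ∈ p)).card :=
            Finset.card_biUnion_le
        _ ≤ ∑ p ∈ E2, 2 := Finset.sum_le_sum (fun p _ => sym2_filter_card_le p)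
        _ = 2 * E2.card := by rw [Finset.sum_const, smul_eq_mul, mul_comm]
        _ ≤ 2 * k := by omega
    have hsplitK : (K.filter tch).card + (K.filter (fun w => ¬ tch w)).card
        = K.card := Finset.card_filter_add_card_filter_not _
    -- untouched pair lemma
    have hUT : ∀ a w : V, ¬ tch w → (G'.Adj a w ↔ (G.Adj a w ∧ a ≠ w)) := by
      intro a w hw
      have hpEp : s(a,w) ∉ Ep := fun h =>
        hw ⟨s(a,w), Finset.mem_union_left _ h, Sym2.mem_mk_right a w⟩
      have hpEm : s(a,w) ∉ Em := fun h =>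
        hw ⟨s(a,w), Finset.mem_union_right _ h, Sym2.mem_mk_right a w⟩
      rw [hG'def, edited_adj]
      constructor
      · rintro ⟨h1 | h1, -, hne'⟩
        · exact ⟨h1, hne'⟩
        · exact absurd h1 hpEp
      · rintro ⟨h1, hne'⟩
        exact ⟨Or.inl h1, hpEm, hne'⟩
    -- no edit pair inside K
    have hnopair : ∀ p ∈ E2, ¬ (∀ w ∈ p, w ∈ K) := by
      intro p hp hpK
      induction p using Sym2.ind with
      | _ a b =>
        have haK : a ∈ K := hpK a (Sym2.mem_mk_left a b)
        have hbK : b ∈ K := hpK b (Sym2.mem_mk_right a b)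
        rcases Finset.mem_union.1 hp with hpe | hpm
        · have hne' : a ≠ b := fun h => (hEp _ hpe).2 (Sym2.mk_isDiag_iff.2 h)
          exact (hEp _ hpe).1 ((SimpleGraph.mem_edgeSet G).2 (hKadj a haK b hbK hne'))
        · have hadj : G.Adj a b := (SimpleGraph.mem_edgeSet G).1 (hEm _ hpm)
          have hatch : tch a := ⟨s(a,b), hp, Sym2.mem_mk_left a b⟩
          have hbtch : tch b := ⟨s(a,b), hp, Sym2.mem_mk_right a b⟩
          -- two untouched vertices of K
          have hK0crude : 2 ≤ (K.filter (fun w => ¬ tch w)).card := by omega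
          obtain ⟨w, hw, w', hw', hww'⟩ := Finset.one_lt_card.1 hK0crude
          have hwK := (Finset.mem_filter.1 hw).1
          have hwnt := (Finset.mem_filter.1 hw).2
          have hw'K := (Finset.mem_filter.1 hw').1
          have hw'nt := (Finset.mem_filter.1 hw').2
          have hwa : w ≠ a := fun h => hwnt (h ▸ hatch)
          have hwb : w ≠ b := fun h => hwnt (h ▸ hbtch)
          have hw'a : w' ≠ a := fun h => hw'nt (h ▸ hatch)
          have hw'b : w' ≠ b := fun h => hw'nt (h ▸ hbtch)
          have hnG'ab : ¬ G'.Adj a b := by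
            rw [hG'def, edited_adj]
            rintro ⟨-, h2, -⟩
            exact h2 hpm
          refine hdf w w' a b ⟨hww', hwa, hwb, hw'a, hw'b, hadj.ne, ?_, ?_, ?_, ?_, ?_, hnG'ab⟩
          · exact (hUT w w' hw'nt).2 ⟨hKadj w hwK w' hw'K hww', hww'⟩
          · exact ((hUT a w hwnt).2 ⟨hKadj a haK w hwK hwa.symm, hwa.symm⟩).symm
          · exact ((hUT b w hwnt).2 ⟨hKadj b hbK w hwK hwb.symm, hwb.symm⟩).symm
          · exact ((hUT a w' hw'nt).2 ⟨hKadj a haK w' hw'K hw'a.symm, hw'a.symm⟩).symm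
          · exact ((hUT b w' hw'nt).2 ⟨hKadj b hbK w' hw'K hw'b.symm, hw'b.symm⟩).symm
    -- refined bound : at most k touched vertices in K
    have hTKk : (K.filter tch).card ≤ k := by
      have hinj : ∀ w ∈ K.filter tch, ∃ p ∈ E2, w ∈ p :=
        fun w hw => (Finset.mem_filter.1 hw).2
      set f : V → Sym2 V := fun w =>
        if h : tch w then h.choose else s(w,w) with hfdef
      have hf1 : ∀ w, tch w → (f w ∈ E2 ∧ w ∈ f w) := by
        intro w hw
        rw [hfdef]
        simp only [dif_pos hw]
        exact ⟨hw.choose_spec.1, hw.choose_spec.2⟩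
      have hcard := Finset.card_le_card_of_injOn f
        (fun w hw => (hf1 w (Finset.mem_filter.1 hw).2).1)
        (by
          intro w hw w' hw' hfe
          by_contra hne'
          have h1 := hf1 w (Finset.mem_filter.1 hw).2
          have h2 := hf1 w' (Finset.mem_filter.1 hw').2
          have hmem : w' ∈ f w := hfe ▸ h2.2
          have hpform := sym2_eq_of_two_mem h1.2 hmem hne'
          refine hnopair (f w) h1.1 ?_
          rw [hpform]
          intro z hz
          rcases Sym2.mem_iff.1 hz with rfl | rfl
          · exact (Finset.mem_filter.1 hw).1
          · exact (Finset.mem_filter.1 hw').1)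
      exact le_trans hcard hE2card
    set K0 : Finset V := K.filter (fun w => ¬ tch w) with hK0def
    have hK0card : 2 * k + 2 ≤ K0.card := by omega
    have hrtch : tch r := ⟨s(r,sv), Finset.mem_union_left _ hrsEp,
      Sym2.mem_mk_left r sv⟩
    have hsvtch : tch sv := ⟨s(r,sv), Finset.mem_union_left _ hrsEp,
      Sym2.mem_mk_right r sv⟩
    have hG'rs : G'.Adj r sv := by
      rw [hG'def, edited_adj]
      refine ⟨Or.inr hrsEp, fun h => (hEp _ hrsEp).1 (hEm _ h), hrs⟩
    by_cases hall : ∀ w ∈ K0, G'.Adj sv w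
    · -- all untouched K-vertices are common neighbours of r and sv in G
      have hwit := witness_of_clique G k r sv K0 hK0card
        (by
          intro w hw
          have hwK := (Finset.mem_filter.1 hw).1
          have hwnt := (Finset.mem_filter.1 hw).2
          have hrw : r ≠ w := fun h => hwnt (h ▸ hrtch)
          refine ⟨hKadj r hrK w hwK hrw, ?_⟩
          exact ((hUT sv w hwnt).1 (hall w hw)).1)
        (by
          intro w hw w' hw' hww'
          exact hKadj w (Finset.mem_filter.1 hw).1 w' (Finset.mem_filter.1 hw').1 hww')
      exact hred.1 r sv hrs nrs hwit
    · push_neg at hall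
      obtain ⟨w₁, hw₁K0, hnsw₁⟩ := hall
      have hw₁K := (Finset.mem_filter.1 hw₁K0).1
      have hw₁nt := (Finset.mem_filter.1 hw₁K0).2
      have hrw₁ : r ≠ w₁ := fun h => hw₁nt (h ▸ hrtch)
      have hc₁w₁ : c₁ ≠ w₁ := by
        rintro rfl
        exact hnsw₁ g'c1s.symm
      have hsvw₁ : sv ≠ w₁ := fun h => hsvK (h ▸ hw₁K)
      refine hdf r c₁ sv w₁ ⟨arc1.ne, hrs, hrw₁, g'c1s.ne, hc₁w₁, hsvw₁,
        g'rc1, hG'rs, ?_, g'c1s, ?_, hnsw₁⟩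
      · exact (hUT r w₁ hw₁nt).2 ⟨hKadj r hrK w₁ hw₁K hrw₁, hrw₁⟩
      · exact (hUT c₁ w₁ hw₁nt).2 ⟨hKadj c₁ hc₁K w₁ hw₁K hc₁w₁, hc₁w₁⟩
  exact ⟨K, ⟨⟨hKmax, K', hK'max, hKne, hcard2⟩, hsmall⟩, huK⟩

end DF7
/-- for a minimum solution to a reduced yes-instance, every vertex
incident to an added edge lies in some small type-I maximal clique of `G`. -/
theorem stmt7 [Fintype V] [DecidableEq V] (G : SimpleGraph V) (k : ℕ)
    (hred : Reduced G k) (hyes : YesInstance G k)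
    (Ep Em : Finset (Sym2 V)) (hmin : IsMinSolution G k Ep Em)
    (hsol : IsSolution G k Ep Em) :
    ∀ e ∈ Ep, ∀ w ∈ e, ∃ K : Finset V, SmallTypeI G k K ∧ w ∈ K := by
  intro e he w hw
  induction e using Sym2.ind with
  | _ u v =>
    rcases Sym2.mem_iff.1 hw with rfl | rfl
    · exact DF7.main_endpoint G k hred Ep Em hmin w v he
    · exact DF7.main_endpoint G k hred Ep Em hmin w u
        (by rwa [Sym2.eq_swap])
end
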